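/- arXiv:2106.10368 — 6 statements merged into one kernel-verified Lean document; each statement's English description precedes it below -/
import Mathlib

section
/- Let G be a simple 3-regular graph that has a Hamiltonian cycle. Then the line graph L(G) decomposes into two Hamiltonian cycles, i.e., the edge set of L(G) is the disjoint union of the edge sets of two Hamiltonian cycles of L(G). -/
open SimpleGraph

/-- A simple graph decomposes into two Hamiltonian cycles: its edge set is the
disjoint union of the edge sets of two Hamiltonian cycles. -/
def SimpleGraph.DecompTwoHamCycles {W : Type*} [DecidableEq W] (H : SimpleGraph W) : Prop :=
  ∃ (a b : W) (p : H.Walk a a) (q : H.Walk b b),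
    p.IsHamiltonianCycle ∧ q.IsHamiltonianCycle ∧
    Disjoint {x | x ∈ p.edges} {x | x ∈ q.edges} ∧
    {x | x ∈ p.edges} ∪ {x | x ∈ q.edges} = H.edgeSet

/-! Number the Hamiltonian cycle `v₀, …, v_{n-1}`. Since `G` is cubic, each `vᵢ` has exactly one
further neighbour `v_{σ i}`, and `σ` is a fixed-point-free involution. In `L(G)` the three edges at
`vᵢ`, namely `e_{i-1} = v_{i-1}vᵢ`, `eᵢ = vᵢv_{i+1}` and the chord `mᵢ = vᵢv_{σ i}`, span a
triangle, and every edge of `L(G)` lies in exactly one of these triangles. Choose one endpoint of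
every chord. The closed walk `e_{-1}, e₀, …, e_{n-1}` of `L(G)` that detours
`e_{i-1} → mᵢ → eᵢ` exactly at the chosen endpoints visits every vertex of `L(G)` once; the walk
for the opposite choice uses, in every triangle, exactly the edges the first one leaves out.

Below, `vᵢ`, `σ`, `eᵢ`, `mᵢ` are `vert i`, `chord`, `cycleEdge i`, `chordEdge i`, and the choice
of endpoints is `d : ZMod n → Bool`. -/

namespace List

variable {α : Type*} {a b : α}

theorem pair_infix_append_iff {l₁ l₂ : List α} (h : l₂ ≠ []) :
    [a, b] <:+: l₁ ++ l₂ ↔ [a, b] <:+: l₁ ++ l₂.take 1 ∨ [a, b] <:+: l₂ := by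
  refine ⟨fun hab => ?_, ?_⟩
  · rcases infix_append_iff_ne_nil.mp hab with h₁ | h₂ | ⟨l₁', l₂', h₁', h₂', hab, hs, hp⟩
    · exact .inl (infix_append_of_infix_left h₁)
    · exact .inr h₂
    · have hlen := congrArg length hab
      rw [length_append] at hlen
      obtain ⟨x, rfl⟩ := length_eq_one_iff.mp (show l₁'.length = 1 by
        have := length_pos_iff.mpr h₁'; have := length_pos_iff.mpr h₂'; simp at hlen; omega)
      obtain ⟨y, rfl⟩ := length_eq_one_iff.mp (show l₂'.length = 1 by
        have := length_pos_iff.mpr h₂'; simp at hlen; omega)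
      obtain ⟨rfl, rfl⟩ : a = x ∧ b = y := by simpa using hab
      obtain ⟨t, rfl⟩ := hs
      obtain ⟨t', rfl⟩ := hp
      exact .inl ⟨t, [], by simp⟩
  · rintro (h' | h')
    · exact h'.trans ((prefix_append_right_inj l₁).mpr (take_prefix 1 l₂)).isInfix
    · exact infix_append_of_infix_right h'

theorem pair_infix_flatMap_range_iff {blk : ℕ → List α} (hblk : ∀ j, blk j ≠ []) (k : ℕ) :
    [a, b] <:+: (range k).flatMap blk ++ (blk k).take 1 ↔
      ∃ j < k, [a, b] <:+: blk j ++ (blk (j + 1)).take 1 := by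
  induction k with
  | zero =>
    simp only [range_zero, flatMap_nil, nil_append, not_lt_zero, false_and, exists_false,
      iff_false]
    exact fun h => by simpa using h.length_le.trans (length_take_le 1 _)
  | succ k ih =>
    rw [range_succ, flatMap_append, flatMap_singleton, append_assoc,
      pair_infix_append_iff (by simp [hblk]),
      take_append_of_le_length (length_pos_iff.mpr (hblk k)), ih]
    constructor
    · rintro (⟨j, hj, h⟩ | h)
      · exact ⟨j, by omega, h⟩
      · exact ⟨k, by omega, h⟩
    · rintro ⟨j, hj, h⟩
      rcases Nat.lt_succ_iff_lt_or_eq.mp hj with hj | rfl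
      · exact .inl ⟨j, hj, h⟩
      · exact .inr h

end List

section TriangleRoute

variable {α : Type*} {a b x m y : α}

def triangleRoute (β : Bool) (x m y : α) : List α := if β then [x, m, y] else [x, y]

theorem triangleRoute_nodup (hxm : x ≠ m) (hxy : x ≠ y) (hmy : m ≠ y) (β : Bool) :
    (triangleRoute β x m y).Nodup := by
  cases β <;> simp [triangleRoute, hxm, hxy, hmy]

theorem mem_of_mem_triangleRoute {β : Bool} {z : α} (h : z ∈ triangleRoute β x m y) :
    z = x ∨ z = m ∨ z = y := by
  cases β <;> simp [triangleRoute] at h <;> tauto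

theorem triangleRoute_pairs_disjoint (hxm : x ≠ m) (hxy : x ≠ y) (hmy : m ≠ y) (β : Bool)
    (h : [a, b] <:+: triangleRoute β x m y ∨ [b, a] <:+: triangleRoute β x m y)
    (h' : [a, b] <:+: triangleRoute (!β) x m y ∨ [b, a] <:+: triangleRoute (!β) x m y) :
    False := by
  cases β <;> simp [triangleRoute, List.infix_cons_iff] at h h' <;> grind

theorem triangleRoute_pairs_cover (β : Bool) {f g : α} (hf : f = x ∨ f = m ∨ f = y)
    (hg : g = x ∨ g = m ∨ g = y) (hfg : f ≠ g) :
    ([f, g] <:+: triangleRoute β x m y ∨ [g, f] <:+: triangleRoute β x m y) ∨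
      ([f, g] <:+: triangleRoute (!β) x m y ∨ [g, f] <:+: triangleRoute (!β) x m y) := by
  cases β <;> simp [triangleRoute, List.infix_cons_iff] <;> grind

end TriangleRoute

theorem ZMod.sub_one_ne_add_one {n : ℕ} (hn : 3 ≤ n) (i : ZMod n) : i - 1 ≠ i + 1 := by
  intro h
  have h2 : ((2 : ℕ) : ZMod n) = 0 := by push_cast; linear_combination -h
  have := Nat.le_of_dvd two_pos ((ZMod.natCast_eq_zero_iff 2 n).mp h2)
  omega

namespace SimpleGraph

variable {V : Type*} {G : SimpleGraph V}

theorem exists_isHamiltonianCycle_support_eq [DecidableEq V] {L : List V} (hnd : L.Nodup)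
    (hmem : ∀ x, x ∈ L) (hlen : 3 ≤ L.length) (hchain : (L ++ L.take 1).IsChain G.Adj) :
    ∃ (u : V) (p : G.Walk u u), p.IsHamiltonianCycle ∧ p.support = L ++ L.take 1 := by
  obtain ⟨x, l, rfl⟩ := List.exists_cons_of_length_pos (by omega : 0 < L.length)
  let p : G.Walk x x := (Walk.ofSupport _ (by simp) hchain).copy rfl (by simp)
  have hp : p.support = x :: l ++ [x] :=
    (Walk.support_copy _ _ _).trans (Walk.support_ofSupport _ _)
  have hnil : ¬ p.Nil := by simp [Walk.nil_iff_support_eq, hp]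
  have htail : p.support.tail.Nodup ∧ ∀ y, y ∈ p.support.tail := by
    have hperm : (l ++ [x]).Perm (x :: l) := List.perm_append_singleton x l
    simpa [hp] using
      ⟨hperm.nodup_iff.mpr hnd, fun y => by simpa using hperm.mem_iff.mpr (hmem y)⟩
  refine ⟨x, p, Walk.isHamiltonianCycle_iff_isCycle_and_support_count_tail_eq_one.mpr
    ⟨?_, ?_⟩, hp⟩
  · refine Walk.isCycle_iff_isPath_tail_and_le_length.mpr ⟨?_, ?_⟩
    · rw [Walk.isPath_def, Walk.support_tail_of_not_nil _ hnil]; exact htail.1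
    · have := congrArg List.length hp; simp at this hlen ⊢; omega
  · exact fun y => List.count_eq_one_of_mem htail.1 (htail.2 y)

theorem Walk.IsHamiltonianCycle.exists_equiv_zmod [Fintype V] [DecidableEq V] {a : V}
    {c : G.Walk a a} (hc : c.IsHamiltonianCycle) :
    ∃ v : ZMod c.length ≃ V, ∀ i, G.Adj (v i) (v (i + 1)) := by
  have hlen := hc.isCycle.three_le_length
  have : NeZero c.length := ⟨by omega⟩
  have hinj : Function.Injective fun i : ZMod c.length => c.getVert i.val := fun i j h =>
    ZMod.val_injective _ <| hc.isCycle.getVert_injOn'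
      (by simp only [Set.mem_ofPred_eq]; have := i.val_lt; omega)
      (by simp only [Set.mem_ofPred_eq]; have := j.val_lt; omega) h
  refine ⟨.ofBijective _ (hinj.bijective_of_nat_card_le ?_), fun i => ?_⟩
  · simp [Nat.card_eq_fintype_card, hc.length_eq]
  · have hwrap : c.getVert ((i.val + 1) % c.length) = c.getVert (i.val + 1) := by
      rcases Nat.lt_or_eq_of_le (show i.val + 1 ≤ c.length from i.val_lt) with h | h
      · rw [Nat.mod_eq_of_lt h]
      · rw [h, Nat.mod_self, Walk.getVert_zero, Walk.getVert_length]
    simpa [ZMod.val_add, ZMod.val_one'' (show c.length ≠ 1 by omega), hwrap] using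
      c.adj_getVert_succ i.val_lt

theorem IsRegularOfDegree.exists_third_neighbor [G.LocallyFinite] [DecidableEq V]
    (hreg : G.IsRegularOfDegree 3) {x a b : V} (ha : G.Adj x a) (hb : G.Adj x b) (hab : a ≠ b) :
    ∃ w, w ≠ a ∧ w ≠ b ∧ ∀ y, G.Adj x y ↔ y = a ∨ y = b ∨ y = w := by
  have hsub : {a, b} ⊆ G.neighborFinset x := by simp [Finset.insert_subset_iff, ha, hb]
  obtain ⟨w, hw⟩ := Finset.card_eq_one.mp <| show (G.neighborFinset x \ {a, b}).card = 1 by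
    rw [Finset.card_sdiff_of_subset hsub, card_neighborFinset_eq_degree, hreg x,
      Finset.card_pair hab]
  have hmem : ∀ y, y ∈ G.neighborFinset x \ {a, b} ↔ y = w := by simp [hw]
  simp only [Finset.mem_sdiff, mem_neighborFinset, Finset.mem_insert, Finset.mem_singleton,
    not_or] at hmem
  refine ⟨w, ((hmem w).mpr rfl).2.1, ((hmem w).mpr rfl).2.2, fun y => ?_⟩
  by_cases hya : y = a
  · simp [hya, ha]
  by_cases hyb : y = b
  · simp [hyb, hb]
  simpa [hya, hyb] using hmem y

structure CycleWithChords (G : SimpleGraph V) (n : ℕ) where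
  vert : ZMod n ≃ V
  chord : ZMod n → ZMod n
  three_le : 3 ≤ n
  adj_iff : ∀ i j, G.Adj (vert i) (vert j) ↔ j = i - 1 ∨ j = i + 1 ∨ j = chord i
  chord_ne_sub_one : ∀ i, chord i ≠ i - 1
  chord_ne_add_one : ∀ i, chord i ≠ i + 1

namespace CycleWithChords

variable {n : ℕ} (C : CycleWithChords G n)

theorem adj_add_one (i : ZMod n) : G.Adj (C.vert i) (C.vert (i + 1)) :=
  (C.adj_iff _ _).mpr (.inr (.inl rfl))

theorem adj_chord (i : ZMod n) : G.Adj (C.vert i) (C.vert (C.chord i)) :=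
  (C.adj_iff _ _).mpr (.inr (.inr rfl))

theorem chord_ne_self (i : ZMod n) : C.chord i ≠ i := fun h =>
  (C.adj_chord i).ne (by rw [h])

theorem chord_chord (i : ZMod n) : C.chord (C.chord i) = i := by
  rcases (C.adj_iff _ _).mp (C.adj_chord i).symm with h | h | h
  · exact absurd (by linear_combination -h) (C.chord_ne_add_one i)
  · exact absurd (by linear_combination -h) (C.chord_ne_sub_one i)
  · exact h.symm

def cycleEdge (i : ZMod n) : G.edgeSet := ⟨s(C.vert i, C.vert (i + 1)), C.adj_add_one i⟩

def chordEdge (i : ZMod n) : G.edgeSet := ⟨s(C.vert i, C.vert (C.chord i)), C.adj_chord i⟩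

theorem vert_mem_iff (i : ZMod n) (f : G.edgeSet) :
    C.vert i ∈ (f : Sym2 V) ↔
      f = C.cycleEdge (i - 1) ∨ f = C.chordEdge i ∨ f = C.cycleEdge i := by
  refine ⟨fun h => ?_, ?_⟩
  · obtain ⟨z, hz⟩ := f
    obtain ⟨y, rfl⟩ := Sym2.mem_iff_exists.mp h
    obtain ⟨j, rfl⟩ := C.vert.surjective y
    rcases (C.adj_iff i j).mp hz with rfl | rfl | rfl
    · exact .inl (Subtype.ext (by simp [cycleEdge, Sym2.eq_swap]))
    · exact .inr (.inr rfl)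
    · exact .inr (.inl rfl)
  · rintro (rfl | rfl | rfl) <;> simp [cycleEdge, chordEdge]

theorem cycleEdge_injective : Function.Injective C.cycleEdge := fun i j h => by
  rcases Sym2.eq_iff.mp (congrArg Subtype.val h) with ⟨h₁, -⟩ | ⟨h₁, h₂⟩
  · exact C.vert.injective h₁
  · rw [C.vert.injective.eq_iff] at h₁ h₂
    exact absurd (by linear_combination h₁ - h₂) (ZMod.sub_one_ne_add_one C.three_le j)

theorem chordEdge_ne_cycleEdge (i j : ZMod n) : C.chordEdge i ≠ C.cycleEdge j := fun h => by
  rcases Sym2.eq_iff.mp (congrArg Subtype.val h) with ⟨h₁, h₂⟩ | ⟨h₁, h₂⟩ <;>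
    rw [C.vert.injective.eq_iff] at h₁ h₂ <;> subst h₁
  · exact C.chord_ne_add_one _ h₂
  · exact C.chord_ne_sub_one _ (by rw [h₂]; ring)

theorem chordEdge_eq_chordEdge_iff (i j : ZMod n) :
    C.chordEdge i = C.chordEdge j ↔ j = i ∨ j = C.chord i := by
  refine ⟨fun h => ?_, ?_⟩
  · rcases Sym2.eq_iff.mp (congrArg Subtype.val h) with ⟨h₁, -⟩ | ⟨-, h₂⟩ <;>
      rw [C.vert.injective.eq_iff] at *
    · exact .inl h₁.symm
    · exact .inr h₂.symm
  · rintro (rfl | rfl)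
    · rfl
    · exact Subtype.ext (by simp [chordEdge, C.chord_chord, Sym2.eq_swap])

theorem cycleEdge_sub_one_ne (i : ZMod n) : C.cycleEdge (i - 1) ≠ C.cycleEdge i := by
  have : Fact (1 < n) := ⟨by linarith [C.three_le]⟩
  exact C.cycleEdge_injective.ne (by simp)

theorem exists_eq_cycleEdge_or_chordEdge (f : G.edgeSet) :
    ∃ i, f = C.cycleEdge i ∨ f = C.chordEdge i := by
  obtain ⟨z, hz⟩ := f
  induction z using Sym2.ind with
  | _ x y =>
    have hx : C.vert (C.vert.symm x) ∈ s(x, y) := by simp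
    rcases (C.vert_mem_iff _ ⟨_, hz⟩).mp hx with h | h | h
    exacts [⟨_, .inl h⟩, ⟨_, .inr h⟩, ⟨_, .inl h⟩]

theorem exists_chord_orientation : ∃ d : ZMod n → Bool, ∀ i, d (C.chord i) = !d i := by
  have : NeZero n := ⟨by linarith [C.three_le]⟩
  refine ⟨fun i => decide (i.val < (C.chord i).val), fun i => ?_⟩
  have hne : (C.chord i).val ≠ i.val := fun h => C.chord_ne_self i (ZMod.val_injective n h)
  simp only [C.chord_chord]
  by_cases h : i.val < (C.chord i).val <;> simp [h] <;> omega

variable (d : ZMod n → Bool)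

def block (i : ZMod n) : List G.edgeSet :=
  C.cycleEdge (i - 1) :: if d i then [C.chordEdge i] else []

def route (i : ZMod n) : List G.edgeSet :=
  triangleRoute (d i) (C.cycleEdge (i - 1)) (C.chordEdge i) (C.cycleEdge i)

def tour : List G.edgeSet := (List.range n).flatMap fun j : ℕ => C.block d j

theorem mem_block_iff {i : ZMod n} {f : G.edgeSet} :
    f ∈ C.block d i ↔ f = C.cycleEdge (i - 1) ∨ (d i ∧ f = C.chordEdge i) := by
  unfold block
  cases d i <;> simp

theorem block_append_cycleEdge (i : ZMod n) : C.block d i ++ [C.cycleEdge i] = C.route d i := by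
  unfold block route triangleRoute
  cases d i <;> rfl

theorem route_nodup (i : ZMod n) : (C.route d i).Nodup :=
  triangleRoute_nodup (C.chordEdge_ne_cycleEdge _ _).symm (C.cycleEdge_sub_one_ne i)
    (C.chordEdge_ne_cycleEdge _ _) _

theorem vert_mem_of_pair_infix_route {i : ZMod n} {a b : G.edgeSet}
    (h : [a, b] <:+: C.route d i ∨ [b, a] <:+: C.route d i) :
    C.vert i ∈ (a : Sym2 V) ∧ C.vert i ∈ (b : Sym2 V) := by
  have hmem : a ∈ C.route d i ∧ b ∈ C.route d i := by
    rcases h with h | h <;> exact ⟨h.subset (by simp), h.subset (by simp)⟩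
  exact ⟨(C.vert_mem_iff i a).mpr (mem_of_mem_triangleRoute hmem.1),
    (C.vert_mem_iff i b).mpr (mem_of_mem_triangleRoute hmem.2)⟩

theorem lineGraph_adj_of_pair_infix_route {i : ZMod n} {a b : G.edgeSet}
    (h : [a, b] <:+: C.route d i) : G.lineGraph.Adj a b := by
  have hab : [a, b].Nodup := (C.route_nodup d i).sublist h.sublist
  have hv := C.vert_mem_of_pair_infix_route d (.inl h)
  exact lineGraph_adj_iff_exists.mpr ⟨by simpa using hab, C.vert i, hv.1, hv.2⟩

theorem mem_tour_iff {f : G.edgeSet} : f ∈ C.tour d ↔ ∃ i, f ∈ C.block d i := by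
  have : NeZero n := ⟨by linarith [C.three_le]⟩
  simp only [tour, List.mem_flatMap, List.mem_range]
  exact ⟨fun ⟨j, _, h⟩ => ⟨j, h⟩, fun ⟨i, h⟩ => ⟨i.val, i.val_lt, by simpa using h⟩⟩

theorem pair_infix_tour_iff {a b : G.edgeSet} :
    [a, b] <:+: C.tour d ++ (C.tour d).take 1 ↔ ∃ i, [a, b] <:+: C.route d i := by
  have : NeZero n := ⟨by linarith [C.three_le]⟩
  have htake : (C.tour d).take 1 = (C.block d (n : ℕ)).take 1 := by
    rw [ZMod.natCast_self]
    obtain ⟨k, rfl⟩ : ∃ k, n = k + 1 := ⟨n - 1, by have := C.three_le; omega⟩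
    simp [tour, block, List.range_succ_eq_map]
  have hroute (j : ℕ) : C.block d j ++ (C.block d (j + 1 : ℕ)).take 1 = C.route d j := by
    simpa [block] using C.block_append_cycleEdge d j
  rw [htake, tour, List.pair_infix_flatMap_range_iff (fun j => by simp [block])]
  simp only [hroute]
  exact ⟨fun ⟨j, _, h⟩ => ⟨j, h⟩, fun ⟨i, h⟩ => ⟨i.val, i.val_lt, by simpa using h⟩⟩

theorem isChain_tour : (C.tour d ++ (C.tour d).take 1).IsChain G.lineGraph.Adj :=
  List.isChain_iff_forall_rel_of_append_cons_cons.mpr fun a b l₁ l₂ h => by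
    obtain ⟨i, hi⟩ := (C.pair_infix_tour_iff d (a := a) (b := b)).mp ⟨l₁, l₂, by rw [h]; simp⟩
    exact C.lineGraph_adj_of_pair_infix_route d hi

variable {d}

theorem block_disjoint (hd : ∀ i, d (C.chord i) = !d i) {i i' : ZMod n} (h : i ≠ i') :
    (C.block d i).Disjoint (C.block d i') := by
  intro f hf hf'
  rw [mem_block_iff] at hf hf'
  rcases hf with rfl | ⟨hdi, rfl⟩ <;> rcases hf' with h' | ⟨hdi', h'⟩
  · exact h (sub_left_injective (C.cycleEdge_injective h'))
  · exact C.chordEdge_ne_cycleEdge _ _ h'.symm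
  · exact C.chordEdge_ne_cycleEdge _ _ h'
  · rcases (C.chordEdge_eq_chordEdge_iff _ _).mp h' with rfl | rfl
    · exact h rfl
    · simp [hd, hdi] at hdi'

theorem nodup_tour (hd : ∀ i, d (C.chord i) = !d i) : (C.tour d).Nodup := by
  refine List.nodup_flatMap.mpr ⟨fun j _ => ?_, List.nodup_range.pairwise_of_forall_ne
    fun j hj k hk hjk => C.block_disjoint hd fun h => hjk ?_⟩
  · unfold block
    split_ifs <;> simp [(C.chordEdge_ne_cycleEdge _ _).symm]
  · rwa [ZMod.natCast_eq_natCast_iff', Nat.mod_eq_of_lt (List.mem_range.mp hj),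
      Nat.mod_eq_of_lt (List.mem_range.mp hk)] at h

theorem mem_tour (hd : ∀ i, d (C.chord i) = !d i) (f : G.edgeSet) : f ∈ C.tour d := by
  rw [mem_tour_iff]
  obtain ⟨i, rfl | rfl⟩ := C.exists_eq_cycleEdge_or_chordEdge f
  · exact ⟨i + 1, by simp [block]⟩
  · cases hdi : d i
    · exact ⟨C.chord i, by simp [block, hd, hdi, C.chordEdge_eq_chordEdge_iff]⟩
    · exact ⟨i, by simp [block, hdi]⟩

theorem three_le_length_tour (hd : ∀ i, d (C.chord i) = !d i) : 3 ≤ (C.tour d).length := by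
  have h := ((C.route_nodup (fun _ => true) 0).subperm fun f _ => C.mem_tour hd f).length_le
  simpa [route, triangleRoute] using h

theorem exists_isHamiltonianCycle_lineGraph [DecidableEq V] (hd : ∀ i, d (C.chord i) = !d i) :
    ∃ (u : G.edgeSet) (p : G.lineGraph.Walk u u), p.IsHamiltonianCycle ∧
      ∀ a b, s(a, b) ∈ p.edges ↔ ∃ i, [a, b] <:+: C.route d i ∨ [b, a] <:+: C.route d i := by
  obtain ⟨u, p, hp, hsupp⟩ := exists_isHamiltonianCycle_support_eq (C.nodup_tour hd)
    (C.mem_tour hd) (C.three_le_length_tour hd) (C.isChain_tour d)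
  refine ⟨u, p, hp, fun a b => ?_⟩
  rw [← Walk.infix_support_iff_mem_edges, hsupp, pair_infix_tour_iff, pair_infix_tour_iff,
    exists_or]

end CycleWithChords

theorem CycleWithChords.lineGraph_decompTwoHamCycles [DecidableEq V] {n : ℕ}
    (C : CycleWithChords G n) : G.lineGraph.DecompTwoHamCycles := by
  obtain ⟨d, hd⟩ := C.exists_chord_orientation
  obtain ⟨u, p, hp, hpe⟩ := C.exists_isHamiltonianCycle_lineGraph hd
  obtain ⟨u', q, hq, hqe⟩ := C.exists_isHamiltonianCycle_lineGraph (d := fun i => !d i)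
    (by simp [hd])
  refine ⟨u, u', p, q, hp, hq, Set.disjoint_left.mpr fun z hzp hzq => ?_, ?_⟩
  · induction z using Sym2.ind with
    | _ a b =>
      obtain ⟨i, hi⟩ := (hpe a b).mp hzp
      obtain ⟨j, hj⟩ := (hqe a b).mp hzq
      have hai := C.vert_mem_of_pair_infix_route d hi
      have haj := C.vert_mem_of_pair_infix_route _ hj
      -- two distinct edges of `G` share at most one vertex
      obtain rfl : i = j := by_contra fun hij => (p.adj_of_mem_edges hzp).ne <| Subtype.ext <|
        Sym2.eq_of_ne_mem (C.vert.injective.ne hij) hai.1 haj.1 hai.2 haj.2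
      exact triangleRoute_pairs_disjoint (C.chordEdge_ne_cycleEdge _ _).symm
        (C.cycleEdge_sub_one_ne i) (C.chordEdge_ne_cycleEdge _ _) (d i) hi hj
  · ext z
    refine ⟨?_, fun hz => ?_⟩
    · rintro (h | h)
      exacts [p.edges_subset_edgeSet h, q.edges_subset_edgeSet h]
    · induction z using Sym2.ind with
      | _ f g =>
        obtain ⟨hfg, x, hxf, hxg⟩ := lineGraph_adj_iff_exists.mp hz
        obtain ⟨i, rfl⟩ := C.vert.surjective x
        rcases triangleRoute_pairs_cover (d i) ((C.vert_mem_iff i f).mp hxf)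
          ((C.vert_mem_iff i g).mp hxg) hfg with h | h
        exacts [.inl ((hpe f g).mpr ⟨i, h⟩), .inr ((hqe f g).mpr ⟨i, h⟩)]

theorem exists_cycleWithChords [Fintype V] [DecidableEq V] [DecidableRel G.Adj]
    (hreg : G.IsRegularOfDegree 3) {a : V} {c : G.Walk a a} (hc : c.IsHamiltonianCycle) :
    Nonempty (CycleWithChords G c.length) := by
  obtain ⟨v, hv⟩ := hc.exists_equiv_zmod
  have h3 := hc.isCycle.three_le_length
  choose w hw using fun i : ZMod c.length =>
    hreg.exists_third_neighbor (by simpa using (hv (i - 1)).symm) (hv i)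
      (v.injective.ne (ZMod.sub_one_ne_add_one h3 i))
  refine ⟨⟨v, fun i => v.symm (w i), h3, fun i j => ?_, fun i h => ?_, fun i h => ?_⟩⟩
  · simp [(hw i).2.2, v.injective.eq_iff, Equiv.eq_symm_apply]
  · exact (hw i).1 (by simp [← h])
  · exact (hw i).2.1 (by simp [← h])

end SimpleGraph

theorem lineGraph_decomp_of_cubic_hamiltonian {V : Type*} [Fintype V] [DecidableEq V]
    (G : SimpleGraph V) [DecidableRel G.Adj]
    (hreg : G.IsRegularOfDegree 3)
    (hham : ∃ (a : V) (c : G.Walk a a), c.IsHamiltonianCycle) :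
    (G.lineGraph).DecompTwoHamCycles := by
  obtain ⟨a, c, hc⟩ := hham
  obtain ⟨C⟩ := exists_cycleWithChords hreg hc
  exact C.lineGraph_decompTwoHamCycles
end

section
/- Let G be a simple 3-regular graph whose line graph L(G) decomposes into two Hamiltonian cycles. Then G has a Hamiltonian cycle. -/
open SimpleGraph

/-!
Follow the Hamiltonian cycle `e₀ e₁ … eₙ` of `L(G)` and let `tᵢ` be the vertex of `G` shared by
`eᵢ` and `eᵢ₊₁`. Two consecutive terms `tᵢ ≠ tᵢ₊₁` are the ends of `eᵢ₊₁`, hence adjacent.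
As `G` is cubic, four distinct edges never meet at a vertex, so a vertex occurs in the cyclic
sequence `(tᵢ)` only at one or two cyclically consecutive positions. Every vertex does occur:
otherwise all three sides of the triangle of `L(G)` formed by the edges at that vertex would lie
on the second Hamiltonian cycle, which is longer than three. Deleting the repetitions from
`(tᵢ)` thus lists every vertex once, in an order in which cyclically consecutive vertices are
adjacent.
-/

namespace List

variable {α : Type*}

theorem exists_destutter'_eq_cons (R : α → α → Prop) [DecidableRel R] (a : α) :
    ∀ l : List α, ∃ r, l.destutter' R a = a :: r
  | [] => ⟨[], rfl⟩
  | b :: l => by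
    by_cases h : R a b
    · exact ⟨_, destutter'_cons_pos l h⟩
    · rw [destutter'_cons_neg l h]
      exact exists_destutter'_eq_cons R a l

variable [DecidableEq α]

theorem destutter'_ne_cons_self (a : α) (l : List α) :
    (a :: l).destutter' (· ≠ ·) a = l.destutter' (· ≠ ·) a :=
  destutter'_cons_neg (R := (· ≠ ·)) l (not_not.2 rfl)

theorem destutter'_ne_cons_of_ne {a b : α} (l : List α) (h : a ≠ b) :
    (b :: l).destutter' (· ≠ ·) a = a :: l.destutter' (· ≠ ·) b :=
  destutter'_cons_pos (R := (· ≠ ·)) l h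

theorem mem_destutter'_ne {x : α} : ∀ (a : α) (l : List α),
    x ∈ l.destutter' (· ≠ ·) a ↔ x ∈ a :: l
  | a, [] => Iff.rfl
  | a, b :: l => by
    by_cases h : a = b
    · subst h
      rw [destutter'_ne_cons_self, mem_destutter'_ne a l]
      simp
    · rw [destutter'_ne_cons_of_ne l h, mem_cons, mem_destutter'_ne b l]
      exact mem_cons.symm

theorem getLast_destutter'_ne : ∀ (a : α) (l : List α),
    (l.destutter' (· ≠ ·) a).getLast (destutter'_ne_nil l _) = (a :: l).getLast (cons_ne_nil a l)
  | a, [] => rfl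
  | a, b :: l => by
    by_cases h : a = b
    · subst h
      simp only [destutter'_ne_cons_self, getLast_destutter'_ne a l, getLast_cons_cons]
    · simp only [destutter'_ne_cons_of_ne l h, getLast_cons (destutter'_ne_nil l _),
        getLast_destutter'_ne b l, getLast_cons_cons]

theorem isChain_destutter'_ne {R : α → α → Prop} : ∀ (a : α) (l : List α),
    (a :: l).IsChain (fun x y => x ≠ y → R x y) → (l.destutter' (· ≠ ·) a).IsChain R
  | a, [], _ => isChain_singleton a
  | a, b :: l, h => by
    rw [isChain_cons_cons] at h
    by_cases hab : a = b
    · subst hab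
      rw [destutter'_ne_cons_self]
      exact isChain_destutter'_ne a l h.2
    · obtain ⟨r, hr⟩ := exists_destutter'_eq_cons (· ≠ ·) b l
      have hchain := isChain_destutter'_ne b l h.2
      rw [hr] at hchain
      rw [destutter'_ne_cons_of_ne l hab, hr]
      exact hchain.cons_cons (h.1 hab)

theorem nodup_destutter'_ne : ∀ (a : α) (l : List α),
    (∀ i j (hij : i + 1 < j) (hj : j < (a :: l).length), (a :: l)[i] ≠ (a :: l)[j]) →
      (l.destutter' (· ≠ ·) a).Nodup
  | a, [], _ => nodup_singleton a
  | a, b :: l, h => by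
    have htail : ∀ i j (hij : i + 1 < j) (hj : j < (b :: l).length), (b :: l)[i] ≠ (b :: l)[j] :=
      fun i j hij hj => h (i + 1) (j + 1) (by omega) (by simpa using hj)
    by_cases hab : a = b
    · subst hab
      rw [destutter'_ne_cons_self]
      exact nodup_destutter'_ne a l htail
    · rw [destutter'_ne_cons_of_ne l hab, nodup_cons, mem_destutter'_ne, mem_cons, not_or]
      refine ⟨⟨hab, fun ha => ?_⟩, nodup_destutter'_ne b l htail⟩
      obtain ⟨k, hk, rfl⟩ := getElem_of_mem ha
      exact h 0 (k + 2) (by omega) (by simpa using hk) rfl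

end List

namespace SimpleGraph

variable {V : Type*}

theorem IsRegularOfDegree.two_mul_card_edgeFinset [Fintype V] {G : SimpleGraph V}
    [DecidableRel G.Adj] {d : ℕ} (h : G.IsRegularOfDegree d) : 2 * G.edgeFinset.card = d * Fintype.card V := by
  rw [← sum_degrees_eq_twice_card_edges, Finset.sum_congr rfl fun v _ => h.degree_eq v]
  simp [mul_comm]

theorem Walk.IsCycle.exists_cyclic_enum {W : Type*} {H : SimpleGraph W} {u : W} {p : H.Walk u u}
    (hp : p.IsCycle) {n : ℕ} (hn : p.length = n + 1) :
    ∃ e : Fin (n + 1) → W, Function.Injective e ∧ (∀ i, H.Adj (e i) (e (i + 1))) ∧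
      ∀ x y, s(x, y) ∈ p.edges ↔ ∃ i, s(e i, e (i + 1)) = s(x, y) := by
  have hsucc : ∀ i : Fin (n + 1), p.getVert ↑(i + 1) = p.getVert (↑i + 1) := by
    intro i
    rw [Fin.val_add_one]
    split_ifs with h
    · rw [h, Fin.val_last, ← hn, Walk.getVert_length, Walk.getVert_zero]
    · rfl
  refine ⟨fun i => p.getVert i, fun i j h => ?_, fun i => ?_, fun x y => ?_⟩
  · exact Fin.ext (hp.getVert_injOn' (by simp only [Set.mem_ofPred_eq]; omega)
      (by simp only [Set.mem_ofPred_eq]; omega) h)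
  · simpa only [hsucc] using p.adj_getVert_succ (by omega : (i : ℕ) < p.length)
  · simp only [hsucc, Walk.mk_mem_edges_iff_exists, hn]
    exact ⟨fun ⟨i, hi, h⟩ => ⟨⟨i, hi⟩, h⟩, fun ⟨i, h⟩ => ⟨i, i.2, h⟩⟩

section Hamiltonian

variable [Fintype V] [DecidableEq V] {G : SimpleGraph V}

theorem exists_isHamiltonianCycle_of_nodup {l : List V} (hne : l ≠ []) (hchain : l.IsChain G.Adj)
    (hnodup : l.Nodup) (hmem : ∀ x, x ∈ l) (hclose : G.Adj (l.getLast hne) (l.head hne))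
    (hcard : 3 ≤ Fintype.card V) : ∃ (u : V) (c : G.Walk u u), c.IsHamiltonianCycle := by
  let w := Walk.ofSupport l hne hchain
  have hw : w.IsPath := Walk.IsPath.mk' (by rwa [Walk.support_ofSupport])
  have hlen : Fintype.card V ≤ l.length :=
    calc Fintype.card V = l.toFinset.card := by
          rw [Finset.eq_univ_of_forall fun x => List.mem_toFinset.2 (hmem x), Finset.card_univ]
      _ ≤ l.length := l.toFinset_card_le
  have hcycle : (Walk.cons hclose w).IsCycle := by
    refine (Walk.cons_isCycle_iff w hclose).2 ⟨hw, fun h => ?_⟩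
    have := hw.length_eq_one_of_mem_edges (Sym2.eq_swap ▸ h)
    simp only [w, Walk.length_ofSupport] at this
    omega
  refine ⟨_, _, Walk.isHamiltonianCycle_iff_isCycle_and_support_count_tail_eq_one.2
    ⟨hcycle, fun x => ?_⟩⟩
  rw [Walk.support_cons, List.tail_cons, Walk.support_ofSupport]
  exact List.count_eq_one_of_mem hnodup (hmem x)

theorem exists_isHamiltonianCycle_of_stutter {l : List V} (hne : l ≠ [])
    (hchain : l.IsChain fun x y => x ≠ y → G.Adj x y)
    (hsep : ∀ i j (hij : i + 1 < j) (hj : j < l.length), l[i] ≠ l[j])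
    (hmem : ∀ x, x ∈ l) (hclose : G.Adj (l.getLast hne) (l.head hne))
    (hcard : 3 ≤ Fintype.card V) : ∃ (u : V) (c : G.Walk u u), c.IsHamiltonianCycle := by
  obtain ⟨a, l, rfl⟩ := List.exists_cons_of_ne_nil hne
  obtain ⟨r, hr⟩ := List.exists_destutter'_eq_cons (· ≠ ·) a l
  have hlast := List.getLast_destutter'_ne a l
  simp only [hr] at hlast
  refine exists_isHamiltonianCycle_of_nodup (List.cons_ne_nil a r) ?_ ?_ (fun x => ?_) ?_ hcard
  · exact hr ▸ List.isChain_destutter'_ne a l hchain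
  · exact hr ▸ List.nodup_destutter'_ne a l hsep
  · exact hr ▸ (List.mem_destutter'_ne a l).2 (hmem x)
  · rwa [hlast]

theorem exists_isHamiltonianCycle_of_cyclic_of_last_ne {n : ℕ} (t : Fin (n + 1) → V)
    (hstep : ∀ i, t i ≠ t (i + 1) → G.Adj (t i) (t (i + 1)))
    (hrep : ∀ i j, t i = t j → i = j ∨ j = i + 1 ∨ i = j + 1)
    (hsurj : Function.Surjective t) (hlast : t (Fin.last n) ≠ t 0)
    (hcard : 3 ≤ Fintype.card V) : ∃ (u : V) (c : G.Walk u u), c.IsHamiltonianCycle := by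
  refine exists_isHamiltonianCycle_of_stutter (l := List.ofFn t) (by simp) ?_ ?_
    (fun x => ?_) ?_ hcard
  · refine List.isChain_ofFn.2 fun i hi => ?_
    have hsucc : (⟨i + 1, hi⟩ : Fin (n + 1)) = ⟨i, by omega⟩ + 1 := by
      rw [Fin.ext_iff, Fin.val_add_one_of_lt (Fin.mk_lt_mk.2 (by omega))]
    rw [hsucc]
    exact hstep _
  · intro i j hij hj heq
    simp only [List.getElem_ofFn] at heq
    rcases hrep _ _ heq with h | h | h <;>
      simp only [Fin.ext_iff, Fin.val_add_one, Fin.val_last] at h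
    · omega
    · split_ifs at h <;> omega
    · split_ifs at h with hj'
      · have hi0 : (⟨i, by omega⟩ : Fin (n + 1)) = 0 := Fin.ext h
        have hjl : (⟨j, by simpa using hj⟩ : Fin (n + 1)) = Fin.last n := Fin.ext hj'
        exact hlast (by rw [← hi0, ← hjl, heq])
      · omega
  · obtain ⟨i, rfl⟩ := hsurj x
    exact List.mem_ofFn.2 ⟨i, rfl⟩
  · rw [List.getLast_ofFn, List.head_ofFn]
    have h := hstep (Fin.last n) (by rwa [Fin.last_add_one])
    rw [Fin.last_add_one] at h
    exact h

theorem exists_isHamiltonianCycle_of_cyclic {n : ℕ} (t : Fin (n + 1) → V)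
    (hstep : ∀ i, t i ≠ t (i + 1) → G.Adj (t i) (t (i + 1)))
    (hrep : ∀ i j, t i = t j → i = j ∨ j = i + 1 ∨ i = j + 1)
    (hsurj : Function.Surjective t) (hcard : 3 ≤ Fintype.card V) :
    ∃ (u : V) (c : G.Walk u u), c.IsHamiltonianCycle := by
  -- Start right after a change of value, so that no run of equal entries wraps around.
  obtain ⟨m, hm⟩ : ∃ m, t m ≠ t (m + 1) := by
    by_contra! hconst
    have ht : ∀ i, t i = t 0 := Fin.induction rfl fun i hi => by
      rw [← Fin.coeSucc_eq_succ, ← hconst, hi]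
    obtain ⟨x, hx⟩ := Fintype.exists_ne_of_one_lt_card (by omega) (t 0)
    obtain ⟨i, rfl⟩ := hsurj x
    exact hx (ht i)
  refine exists_isHamiltonianCycle_of_cyclic_of_last_ne (fun i => t (m + 1 + i))
    (fun i => by simpa only [add_assoc] using hstep (m + 1 + i)) (fun i j h => ?_)
    (fun x => ?_) ?_ hcard
  · simpa only [add_assoc, add_right_inj] using hrep _ _ h
  · obtain ⟨i, rfl⟩ := hsurj x
    exact ⟨i - (m + 1), by simp⟩
  · rw [add_assoc, add_comm 1, Fin.last_add_one]
    simpa using hm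

end Hamiltonian

section Turns

/-! `e` enumerates a closed walk in `G.lineGraph` and `t i` is the vertex of `G` at which it turns
from the edge `e i` to the edge `e (i + 1)`. -/

variable {G : SimpleGraph V} {n : ℕ} {e : Fin (n + 1) → G.edgeSet} {t : Fin (n + 1) → V}

theorem adj_turn_of_ne (ht : ∀ i, t i ∈ (e i : Sym2 V) ∧ t i ∈ (e (i + 1) : Sym2 V))
    (i : Fin (n + 1)) (hne : t i ≠ t (i + 1)) : G.Adj (t i) (t (i + 1)) := by
  have h : (e (i + 1) : Sym2 V) = s(t i, t (i + 1)) :=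
    (Sym2.mem_and_mem_iff hne).1 ⟨(ht i).2, (ht (i + 1)).1⟩
  simpa [h] using (e (i + 1)).2

theorem turn_eq_of_mem (ht : ∀ i, t i ∈ (e i : Sym2 V) ∧ t i ∈ (e (i + 1) : Sym2 V))
    {k : Fin (n + 1)} (hk : e k ≠ e (k + 1)) {x : V}
    (hx : x ∈ (e k : Sym2 V)) (hx' : x ∈ (e (k + 1) : Sym2 V)) : t k = x := by
  by_contra hne
  refine hk (Subtype.ext ?_)
  rw [(Sym2.mem_and_mem_iff hne).1 ⟨(ht k).1, hx⟩, (Sym2.mem_and_mem_iff hne).1 ⟨(ht k).2, hx'⟩]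

theorem turn_eq_of_mk_eq (ht : ∀ i, t i ∈ (e i : Sym2 V) ∧ t i ∈ (e (i + 1) : Sym2 V))
    (hadj : ∀ i, G.lineGraph.Adj (e i) (e (i + 1))) {k : Fin (n + 1)} {f f' : G.edgeSet}
    (hk : s(e k, e (k + 1)) = s(f, f')) {x : V} (hx : x ∈ (f : Sym2 V)) (hx' : x ∈ (f' : Sym2 V)) :
    t k = x := by
  rcases Sym2.eq_iff.1 hk with ⟨rfl, h⟩ | ⟨rfl, h⟩
  · exact turn_eq_of_mem ht (hadj k).ne hx (h ▸ hx')
  · exact turn_eq_of_mem ht (hadj k).ne hx' (h ▸ hx)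

variable [DecidableEq V] [G.LocallyFinite]

theorem eq_or_eq_add_one_of_turn_eq (hdeg : ∀ v, G.degree v ≤ 3)
    (hinj : Function.Injective e) (hadj : ∀ i, G.lineGraph.Adj (e i) (e (i + 1)))
    (ht : ∀ i, t i ∈ (e i : Sym2 V) ∧ t i ∈ (e (i + 1) : Sym2 V))
    {i j : Fin (n + 1)} (h : t i = t j) : i = j ∨ j = i + 1 ∨ i = j + 1 := by
  by_contra! hc
  obtain ⟨hij, hji, hij'⟩ := hc
  let s : Finset G.edgeSet := {e i, e (i + 1), e j, e (j + 1)}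
  have hcard : s.card = 4 := by
    have := (hadj i).ne
    have := (hadj j).ne
    have := hinj.ne hij
    have := hinj.ne hij'
    have := hinj.ne (Ne.symm hji)
    have := hinj.ne (add_left_injective 1 |>.ne hij)
    rw [Finset.card_insert_of_notMem (by simp [*]), Finset.card_insert_of_notMem (by simp [*]),
      Finset.card_pair (by simp [*])]
  have hsub := Finset.card_le_card_of_injOn (s := s) (t := G.incidenceFinset (t i)) Subtype.val
    (fun f hf => ?_) Subtype.val_injective.injOn
  · rw [hcard, card_incidenceFinset_eq_degree] at hsub
    have := hdeg (t i)
    omega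
  · simp only [s, Finset.coe_insert, Finset.coe_singleton, Set.mem_insert_iff,
      Set.mem_singleton_iff] at hf
    rw [Finset.mem_coe, mem_incidenceFinset]
    refine ⟨f.2, ?_⟩
    rcases hf with rfl | rfl | rfl | rfl
    · exact (ht i).1
    · exact (ht i).2
    · exact h ▸ (ht j).1
    · exact h ▸ (ht j).2

theorem eq_or_eq_or_eq_of_turn_eq (hn : 3 ≤ n) (hdeg : ∀ v, G.degree v ≤ 3)
    (hinj : Function.Injective e) (hadj : ∀ i, G.lineGraph.Adj (e i) (e (i + 1)))
    (ht : ∀ i, t i ∈ (e i : Sym2 V) ∧ t i ∈ (e (i + 1) : Sym2 V))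
    {i j k : Fin (n + 1)} (hij : t i = t j) (hik : t i = t k) : i = j ∨ i = k ∨ j = k := by
  have h₁ := eq_or_eq_add_one_of_turn_eq hdeg hinj hadj ht hij
  have h₂ := eq_or_eq_add_one_of_turn_eq hdeg hinj hadj ht hik
  have h₃ := eq_or_eq_add_one_of_turn_eq hdeg hinj hadj ht (hij ▸ hik)
  simp only [Fin.ext_iff, Fin.val_add_one, Fin.val_last] at h₁ h₂ h₃ ⊢
  split_ifs at h₁ h₂ h₃ <;> omega

theorem false_of_consecutive_triangle (hn : 3 ≤ n) (hdeg : ∀ v, G.degree v ≤ 3)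
    (hinj : Function.Injective e) (hadj : ∀ i, G.lineGraph.Adj (e i) (e (i + 1)))
    (ht : ∀ i, t i ∈ (e i : Sym2 V) ∧ t i ∈ (e (i + 1) : Sym2 V))
    {x : V} {f₁ f₂ f₃ : G.edgeSet} (h₁₂ : f₁ ≠ f₂) (h₁₃ : f₁ ≠ f₃) (h₂₃ : f₂ ≠ f₃)
    (hx₁ : x ∈ (f₁ : Sym2 V)) (hx₂ : x ∈ (f₂ : Sym2 V)) (hx₃ : x ∈ (f₃ : Sym2 V))
    (he₁₂ : ∃ i, s(e i, e (i + 1)) = s(f₁, f₂)) (he₁₃ : ∃ i, s(e i, e (i + 1)) = s(f₁, f₃))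
    (he₂₃ : ∃ i, s(e i, e (i + 1)) = s(f₂, f₃)) : False := by
  obtain ⟨i, hi⟩ := he₁₂
  obtain ⟨j, hj⟩ := he₁₃
  obtain ⟨k, hk⟩ := he₂₃
  have hti := turn_eq_of_mk_eq ht hadj hi hx₁ hx₂
  have htj := turn_eq_of_mk_eq ht hadj hj hx₁ hx₃
  have htk := turn_eq_of_mk_eq ht hadj hk hx₂ hx₃
  rcases eq_or_eq_or_eq_of_turn_eq hn hdeg hinj hadj ht (hti.trans htj.symm) (hti.trans htk.symm)
    with rfl | rfl | rfl
  · exact h₂₃ (Sym2.congr_right.1 (hi.symm.trans hj))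
  · exact h₁₃ (Sym2.congr_left.1 ((hi.symm.trans hk).trans Sym2.eq_swap))
  · exact h₁₂ (Sym2.congr_left.1 (hj.symm.trans hk))

theorem turn_surjective_of_cover (hreg : G.IsRegularOfDegree 3) {m : ℕ} (hm : 3 ≤ m)
    {e' : Fin (m + 1) → G.edgeSet} {t' : Fin (m + 1) → V} (hinj' : Function.Injective e')
    (hadj : ∀ i, G.lineGraph.Adj (e i) (e (i + 1)))
    (hadj' : ∀ i, G.lineGraph.Adj (e' i) (e' (i + 1)))
    (ht : ∀ i, t i ∈ (e i : Sym2 V) ∧ t i ∈ (e (i + 1) : Sym2 V))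
    (ht' : ∀ i, t' i ∈ (e' i : Sym2 V) ∧ t' i ∈ (e' (i + 1) : Sym2 V))
    (hcover : ∀ f f', G.lineGraph.Adj f f' →
      (∃ i, s(e i, e (i + 1)) = s(f, f')) ∨ ∃ i, s(e' i, e' (i + 1)) = s(f, f')) :
    Function.Surjective t := by
  intro x
  by_contra! hx
  have hpair : ∀ f f' : G.edgeSet, f ≠ f' → x ∈ (f : Sym2 V) → x ∈ (f' : Sym2 V) →
      ∃ i, s(e' i, e' (i + 1)) = s(f, f') := fun f f' hne hf hf' =>
    (hcover f f' (lineGraph_adj_iff_exists.2 ⟨hne, x, hf, hf'⟩)).resolve_left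
      fun ⟨i, hi⟩ => hx i (turn_eq_of_mk_eq ht hadj hi hf hf')
  obtain ⟨f₁, f₂, f₃, h₁₂, h₁₃, h₂₃, hf⟩ := Finset.card_eq_three.1
    ((card_incidenceFinset_eq_degree G x).trans (hreg.degree_eq x))
  have hmem : ∀ f ∈ ({f₁, f₂, f₃} : Finset (Sym2 V)), f ∈ G.edgeSet ∧ x ∈ f :=
    fun f h => (mem_incidenceFinset G x f).1 (hf ▸ h)
  obtain ⟨hf₁, hx₁⟩ := hmem f₁ (by simp)
  obtain ⟨hf₂, hx₂⟩ := hmem f₂ (by simp)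
  obtain ⟨hf₃, hx₃⟩ := hmem f₃ (by simp)
  have hne {f f' : Sym2 V} (hf : f ∈ G.edgeSet) (hf' : f' ∈ G.edgeSet) (h : f ≠ f') :
      (⟨f, hf⟩ : G.edgeSet) ≠ ⟨f', hf'⟩ := fun h' => h (congrArg Subtype.val h')
  exact false_of_consecutive_triangle hm (fun v => (hreg.degree_eq v).le) hinj' hadj' ht'
    (hne hf₁ hf₂ h₁₂) (hne hf₁ hf₃ h₁₃) (hne hf₂ hf₃ h₂₃) hx₁ hx₂ hx₃
    (hpair _ _ (hne hf₁ hf₂ h₁₂) hx₁ hx₂) (hpair _ _ (hne hf₁ hf₃ h₁₃) hx₁ hx₃)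
    (hpair _ _ (hne hf₂ hf₃ h₂₃) hx₂ hx₃)

end Turns

end SimpleGraph

theorem cubic_hamiltonian_of_lineGraph_decomp {V : Type*} [Fintype V] [DecidableEq V]
    (G : SimpleGraph V) [DecidableRel G.Adj]
    (hreg : G.IsRegularOfDegree 3)
    (hdec : (G.lineGraph).DecompTwoHamCycles) :
    ∃ (a : V) (c : G.Walk a a), c.IsHamiltonianCycle := by
  obtain ⟨a, b, p, q, hp, hq, -, hcover⟩ := hdec
  have hV : 4 ≤ Fintype.card V := by
    have := G.degree_lt_card_verts (a : Sym2 V).out.1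
    rw [hreg.degree_eq] at this
    omega
  obtain ⟨n, hn⟩ : ∃ n, Fintype.card G.edgeSet = n + 1 :=
    Nat.exists_eq_add_one.2 (Fintype.card_pos_iff.2 ⟨a⟩)
  have hn3 : 3 ≤ n := by
    have := hreg.two_mul_card_edgeFinset
    rw [edgeFinset_card, hn] at this
    omega
  obtain ⟨e, hinj, hadj, hpe⟩ := hp.isCycle.exists_cyclic_enum (hp.length_eq.trans hn)
  obtain ⟨e', hinj', hadj', hqe⟩ := hq.isCycle.exists_cyclic_enum (hq.length_eq.trans hn)
  choose t ht using fun i => (lineGraph_adj_iff_exists.1 (hadj i)).2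
  choose t' ht' using fun i => (lineGraph_adj_iff_exists.1 (hadj' i)).2
  have hcover' : ∀ f f', G.lineGraph.Adj f f' →
      (∃ i, s(e i, e (i + 1)) = s(f, f')) ∨ ∃ i, s(e' i, e' (i + 1)) = s(f, f') :=
    fun f f' h => by
      have h' : s(f, f') ∈ {x | x ∈ p.edges} ∪ {x | x ∈ q.edges} := hcover ▸ h
      exact h'.imp (hpe f f').1 (hqe f f').1
  exact exists_isHamiltonianCycle_of_cyclic t (adj_turn_of_ne ht)
    (fun _ _ => eq_or_eq_add_one_of_turn_eq (fun v => (hreg.degree_eq v).le) hinj hadj ht)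
    (turn_surjective_of_cover hreg hn3 hinj' hadj hadj' ht ht' hcover') (by omega)
end

section
/- Let G be a simple graph with no isolated vertices whose line graph L(G) decomposes into two Hamiltonian cycles. Then exactly one of the following holds: G is isomorphic to the star K_{1,5}; G is 3-regular; or G is (4,2)-biregular. -/
open SimpleGraph

/-- A simple graph is (4,2)-biregular: every vertex has degree 4 or 2, and every
edge joins a degree-4 vertex to a degree-2 vertex. -/
def SimpleGraph.IsBiregular42 {V : Type*} (G : SimpleGraph V)
    [∀ v, Fintype (G.neighborSet v)] : Prop :=
  (∀ v, G.degree v = 4 ∨ G.degree v = 2) ∧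
  ∀ ⦃u v⦄, G.Adj u v →
    (G.degree u = 4 ∧ G.degree v = 2) ∨ (G.degree u = 2 ∧ G.degree v = 4)

/-! Every edge `e` of `G` lies on both Hamiltonian cycles of `L(G)`, so `L(G)` is connected and
4-regular. Since `e = uv` has `deg u + deg v - 2` neighbours in `L(G)`, the degrees of the ends of
every edge of `G` add up to 6, and since `G` has no isolated vertices it is connected too, so its
degrees alternate between some `d` and `6 - d`. For `d = 3` the graph is cubic, for `d ∈ {2, 4}`
it is (4,2)-biregular, and for `d ∈ {1, 5}` every neighbour of a vertex of degree 5 is a leaf,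
so `G` is the star `K_{1,5}`. -/

namespace SimpleGraph

variable {V : Type*} {G : SimpleGraph V}

lemma Preconnected.forall_of_adj_imp (hG : G.Preconnected) {P : V → Prop}
    (hP : ∀ ⦃x y⦄, G.Adj x y → P x → P y) {u : V} (hu : P u) (v : V) : P v := by
  obtain ⟨p⟩ := hG u v
  induction p with
  | nil => exact hu
  | cons h _ ih => exact ih (hP h hu)

lemma preconnected_of_preconnected_lineGraph (hL : G.lineGraph.Preconnected)
    (hG : ∀ v, ∃ w, G.Adj v w) : G.Preconnected := by
  intro u v
  obtain ⟨u', hu⟩ := hG u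
  obtain ⟨v', hv⟩ := hG v
  let P : G.edgeSet → Prop := fun e ↦ ∀ x ∈ (e : Sym2 V), G.Reachable u x
  have hP : ∀ ⦃e f⦄, G.lineGraph.Adj e f → P e → P f := by
    intro e f hef he y hy
    obtain ⟨-, x, hxe, hxf⟩ := lineGraph_adj_iff_exists.mp hef
    obtain rfl | hxy := eq_or_ne x y
    · exact he x hxe
    · have hadj : G.Adj x y := by
        rw [← mem_edgeSet, ← (Sym2.mem_and_mem_iff hxy).mp ⟨hxf, hy⟩]
        exact f.2
      exact (he x hxe).trans hadj.reachable
  have hstart : P ⟨s(u, u'), hu⟩ := by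
    rintro x hx
    obtain rfl | rfl := Sym2.mem_iff.mp hx
    exacts [Reachable.refl x, hu.reachable]
  exact hL.forall_of_adj_imp hP hstart ⟨s(v, v'), hv⟩ v (Sym2.mem_mk_left v v')

lemma ncard_neighborSet_lineGraph_add_two [Fintype V] [DecidableEq V] [DecidableRel G.Adj]
    {u v : V} (huv : G.Adj u v) :
    (G.lineGraph.neighborSet ⟨s(u, v), huv⟩).ncard + 2 = G.degree u + G.degree v := by
  have himage : Subtype.val '' G.lineGraph.neighborSet ⟨s(u, v), huv⟩
      = (G.incidenceSet u ∪ G.incidenceSet v) \ {s(u, v)} := by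
    ext e
    constructor
    · rintro ⟨f, hf, rfl⟩
      obtain ⟨hne, x, hx, hxf⟩ := lineGraph_adj_iff_exists.mp hf
      refine ⟨?_, fun h ↦ hne (Subtype.ext h.symm)⟩
      obtain rfl | rfl := Sym2.mem_iff.mp hx
      exacts [Or.inl ⟨f.2, hxf⟩, Or.inr ⟨f.2, hxf⟩]
    · rintro ⟨hinc, hne⟩
      have he : e ∈ G.edgeSet := by rcases hinc with h | h <;> exact h.1
      refine ⟨⟨e, he⟩, lineGraph_adj_iff_exists.mpr
        ⟨fun h ↦ hne (congrArg Subtype.val h).symm, ?_⟩, rfl⟩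
      rcases hinc with h | h
      exacts [⟨u, Sym2.mem_mk_left u v, h.2⟩, ⟨v, Sym2.mem_mk_right u v, h.2⟩]
  have hcard := Set.ncard_image_of_injective (G.lineGraph.neighborSet ⟨s(u, v), huv⟩)
    Subtype.val_injective
  have hunion := Set.ncard_union_add_ncard_inter (G.incidenceSet u) (G.incidenceSet v)
  have hdiff := Set.ncard_sdiff_singleton_add_one (a := s(u, v))
    (s := G.incidenceSet u ∪ G.incidenceSet v) (Or.inl (G.mk'_mem_incidenceSet_left_iff.mpr huv))
  have hdeg (w : V) : (G.incidenceSet w).ncard = G.degree w := by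
    rw [← coe_incidenceFinset, Set.ncard_coe_finset, card_incidenceFinset_eq_degree]
  rw [G.incidenceSet_inter_incidenceSet_of_adj huv, Set.ncard_singleton, hdeg, hdeg] at hunion
  rw [himage] at hcard
  omega

lemma DecompTwoHamCycles.connected {W : Type*} [Fintype W] [DecidableEq W] {H : SimpleGraph W}
    (h : H.DecompTwoHamCycles) : H.Connected := by
  obtain ⟨a, -, p, -, hp, -⟩ := h
  exact IsHamiltonian.connected fun _ ↦ ⟨a, p, hp⟩

lemma DecompTwoHamCycles.ncard_neighborSet {W : Type*} [DecidableEq W] {H : SimpleGraph W}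
    (h : H.DecompTwoHamCycles) (x : W) : (H.neighborSet x).ncard = 4 := by
  obtain ⟨a, b, p, q, hp, hq, hdisj, hunion⟩ := h
  have hsplit : H.neighborSet x = p.toSubgraph.neighborSet x ∪ q.toSubgraph.neighborSet x := by
    ext y
    simp only [mem_neighborSet, Subgraph.mem_neighborSet, Walk.adj_toSubgraph_iff_mem_edges,
      Set.mem_union, ← mem_edgeSet, ← hunion, Set.mem_ofPred_eq]
  have hp2 := hp.isCycle.ncard_neighborSet_toSubgraph_eq_two (hp.mem_support x)
  have hq2 := hq.isCycle.ncard_neighborSet_toSubgraph_eq_two (hq.mem_support x)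
  rw [hsplit, Set.ncard_union_eq ?_ (Set.finite_of_ncard_pos (by omega))
    (Set.finite_of_ncard_pos (by omega)), hp2, hq2]
  exact Set.disjoint_left.mpr fun y hp hq ↦ Set.disjoint_left.mp hdisj
    (Walk.adj_toSubgraph_iff_mem_edges.mp hp) (Walk.adj_toSubgraph_iff_mem_edges.mp hq)

lemma eq_starGraph_of_forall_adj_degree_eq_one [Fintype V] [DecidableRel G.Adj]
    (hG : G.Preconnected) {r : V} (hr : ∀ ⦃v⦄, G.Adj r v → G.degree v = 1) :
    G = starGraph r := by
  have hleaf {x y : V} (hrx : G.Adj r x) (hxy : G.Adj x y) : y = r :=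
    ((degree_eq_one_iff_existsUnique_adj.mp (hr hrx)).unique hxy hrx.symm)
  have hcover : ∀ x, x = r ∨ G.Adj r x := by
    refine hG.forall_of_adj_imp ?_ (Or.inl rfl)
    rintro x y hxy (rfl | hrx)
    exacts [Or.inr hxy, Or.inl (hleaf hrx hxy)]
  ext x y
  rw [starGraph_adj]
  constructor
  · intro hxy
    refine ⟨hxy.ne, ?_⟩
    rcases hcover x with rfl | hrx
    exacts [Or.inl rfl, Or.inr (hleaf hrx hxy)]
  · rintro ⟨hne, rfl | rfl⟩
    · exact (hcover y).resolve_left hne.symm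
    · exact ((hcover x).resolve_left hne).symm

def starGraphIsoCompleteBipartiteGraph [DecidableEq V] (r : V) :
    completeBipartiteGraph {v // v = r} {v // v ≠ r} ≃g starGraph r where
  toEquiv := Equiv.sumCompl (· = r)
  map_rel_iff' := by
    rintro (⟨x, hx⟩ | ⟨x, hx⟩) (⟨y, hy⟩ | ⟨y, hy⟩) <;> simp [hx, hy, Ne.symm]

lemma completeBipartiteGraph_eq_starGraph {U W : Type*} [Unique U] :
    completeBipartiteGraph U W = starGraph (Sum.inl default) := by
  ext (x | x) (y | y) <;> simp [Unique.eq_default]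

lemma nonempty_iso_completeBipartiteGraph_of_eq_starGraph [Fintype V] [DecidableEq V]
    [DecidableRel G.Adj] {r : V} (hG : G = starGraph r) :
    Nonempty (G ≃g completeBipartiteGraph (Fin 1) (Fin (G.degree r))) := by
  subst hG
  have hleaves : Fintype.card {v // v ≠ r} = (starGraph r).degree r := by
    rw [← card_neighborSet_eq_degree]
    exact Fintype.card_congr (Equiv.subtypeEquivRight fun v ↦ by simp [eq_comm])
  exact ⟨(starGraphIsoCompleteBipartiteGraph r).symm.trans
    (completeBipartiteGraphCongr (Equiv.ofUnique _ _) (Fintype.equivFinOfCardEq hleaves))⟩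

lemma exists_degree_eq_of_iso_completeBipartiteGraph [Fintype V] [DecidableRel G.Adj] {n : ℕ}
    (f : G ≃g completeBipartiteGraph (Fin 1) (Fin n)) : ∃ v, G.degree v = n := by
  rw [completeBipartiteGraph_eq_starGraph] at f
  refine ⟨f.symm (Sum.inl default), ?_⟩
  rw [← f.degree_eq, RelIso.apply_symm_apply, degree_starGraph_center]
  simp

lemma Preconnected.degree_eq_or_add_degree_eq [Fintype V] [DecidableRel G.Adj] {n : ℕ}
    (hG : G.Preconnected) (hsum : ∀ ⦃u v⦄, G.Adj u v → G.degree u + G.degree v = n) (u v : V) :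
    G.degree v = G.degree u ∨ G.degree u + G.degree v = n := by
  refine hG.forall_of_adj_imp (P := fun v ↦ G.degree v = G.degree u ∨ G.degree u + G.degree v = n)
    (fun x y hxy hx ↦ ?_) (Or.inl rfl) v
  have := hsum hxy
  omega

lemma Preconnected.degree_cases_of_add_degree_eq_six [Fintype V] [Nonempty V]
    [DecidableRel G.Adj] (hG : G.Preconnected) (hpos : ∀ v, 0 < G.degree v)
    (hsum : ∀ ⦃u v⦄, G.Adj u v → G.degree u + G.degree v = 6) :
    G.IsRegularOfDegree 3 ∨ (∀ v, G.degree v = 4 ∨ G.degree v = 2) ∨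
      ∃ c, G.degree c = 5 ∧ G = starGraph c := by
  obtain ⟨u⟩ := ‹Nonempty V›
  obtain ⟨w, huw⟩ := (G.degree_pos_iff_exists_adj u).mp (hpos u)
  have hdeg := hG.degree_eq_or_add_degree_eq hsum u
  have := hsum huw; have := hpos u; have := hpos w
  obtain h3 | h24 | h15 : G.degree u = 3 ∨ (G.degree u = 2 ∨ G.degree u = 4) ∨
      (G.degree u = 1 ∨ G.degree u = 5) := by omega
  · exact Or.inl fun v ↦ by have := hdeg v; omega
  · exact Or.inr (Or.inl fun v ↦ by have := hdeg v; omega)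
  · obtain ⟨c, hc⟩ : ∃ c, G.degree c = 5 := by
      rcases h15 with h | h
      exacts [⟨w, by omega⟩, ⟨u, h⟩]
    refine Or.inr (Or.inr ⟨c, hc, eq_starGraph_of_forall_adj_degree_eq_one hG fun v hv ↦ ?_⟩)
    have := hsum hv
    omega

end SimpleGraph

theorem degree_trichotomy {V : Type*} [Fintype V] [DecidableEq V]
    (G : SimpleGraph V) [DecidableRel G.Adj]
    (hiso : ∀ v, 0 < G.degree v)
    (hdec : (G.lineGraph).DecompTwoHamCycles) :
    ((Nonempty (G ≃g completeBipartiteGraph (Fin 1) (Fin 5))) ∧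
      ¬ G.IsRegularOfDegree 3 ∧ ¬ G.IsBiregular42) ∨
    (¬ (Nonempty (G ≃g completeBipartiteGraph (Fin 1) (Fin 5))) ∧
      G.IsRegularOfDegree 3 ∧ ¬ G.IsBiregular42) ∨
    (¬ (Nonempty (G ≃g completeBipartiteGraph (Fin 1) (Fin 5))) ∧
      ¬ G.IsRegularOfDegree 3 ∧ G.IsBiregular42) := by
  have hsum : ∀ ⦃u v⦄, G.Adj u v → G.degree u + G.degree v = 6 := fun u v huv ↦ by
    rw [← ncard_neighborSet_lineGraph_add_two huv, hdec.ncard_neighborSet]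
  have hG := preconnected_of_preconnected_lineGraph hdec.connected.preconnected
    fun v ↦ (G.degree_pos_iff_exists_adj v).mp (hiso v)
  obtain ⟨⟨e, -⟩⟩ := hdec.connected.nonempty
  obtain ⟨u, -⟩ : ∃ u, u ∈ e := ⟨_, Sym2.out_fst_mem e⟩
  have : Nonempty V := ⟨u⟩
  have hnot_iso (hle : ∀ v, G.degree v ≤ 4) :
      ¬ Nonempty (G ≃g completeBipartiteGraph (Fin 1) (Fin 5)) := fun ⟨f⟩ ↦ by
    obtain ⟨v, hv⟩ := exists_degree_eq_of_iso_completeBipartiteGraph f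
    have := hle v
    omega
  rcases hG.degree_cases_of_add_degree_eq_six hiso hsum with hreg | hall | ⟨c, hc, hstar⟩
  · refine Or.inr (Or.inl ⟨hnot_iso fun v ↦ (hreg v).trans_le (by norm_num), hreg, fun hbi ↦ ?_⟩)
    have := hbi.1 u; have := hreg u; omega
  · refine Or.inr (Or.inr ⟨hnot_iso fun v ↦ ?_, fun hreg ↦ ?_, hall, fun x y hxy ↦ ?_⟩)
    · have := hall v; omega
    · have := hreg u; have := hall u; omega
    · have := hall x; have := hall y; have := hsum hxy; omega
  · refine Or.inl ⟨hc ▸ nonempty_iso_completeBipartiteGraph_of_eq_starGraph hstar,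
      fun hreg ↦ ?_, fun hbi ↦ ?_⟩
    · have := hreg c; omega
    · have := hbi.1 c; omega
end

section
/- Let G be a simple 3-regular graph and suppose the edge set of L(G) is the disjoint union of the edge sets of two Hamiltonian cycles H1 and H2 of L(G). Let M be the set of edges e of G such that for some endpoint u of e and some i ∈ {1,2}, both L(G)-edges joining e to the other two edges of G at u belong to Hi. Then M is a perfect matching of G, and the edges in E(G) \ M form a Hamiltonian cycle of G. -/
/-!
At a vertex `u` of `G` the three edges at `u` span a triangle of `L(G)`. A Hamiltonian
cycle of `L(G)` cannot contain a whole triangle (`L(G)` has more than three vertices), so one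
of `H₁`, `H₂` contains exactly two of its sides; their common vertex is the unique edge
re-entrant at `u`. Since `Hᵢ` has degree two at that edge `e`, both `Hᵢ`-neighbours of `e` lie
at `u`, so `e` is re-entrant for the other cycle at its other endpoint. Hence `M` is a perfect
matching and `G - M` is 2-regular. It is connected because walking along `H₁` never leaves a
component of `G - M`: an `H₁`-step out of an edge of `M` stays at the endpoint where that edge
is re-entrant for `H₁`.
-/

lemma Sym2.eq_of_mem_of_mem_of_ne {α : Type*} {x y : α} {z z' : Sym2 α} (hne : z ≠ z')
    (hx : x ∈ z) (hx' : x ∈ z') (hy : y ∈ z) (hy' : y ∈ z') : x = y := by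
  by_contra hxy
  exact hne (Sym2.eq_of_ne_mem hxy hx hy hx' hy')

namespace SimpleGraph.Walk

variable {W : Type*} {K : SimpleGraph W}

lemma mem_of_forall_mem_edges_imp {S : Set W} {u v : W} (c : K.Walk u v)
    (hS : ∀ x y, s(x, y) ∈ c.edges → x ∈ S → y ∈ S) (hu : u ∈ S) {w : W}
    (hw : w ∈ c.support) : w ∈ S := by
  induction c with
  | nil => simp_all
  | cons h t ih =>
    rw [support_cons, List.mem_cons] at hw
    rcases hw with rfl | hw
    · exact hu
    · exact ih (fun x y hxy => hS x y (by simp [hxy])) (hS _ _ (by simp) hu) hw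

lemma IsHamiltonianCycle.mem_of_forall_mem_edges_imp [DecidableEq W] {S : Set W} {a : W}
    {c : K.Walk a a} (hc : c.IsHamiltonianCycle)
    (hS : ∀ x y, s(x, y) ∈ c.edges → x ∈ S → y ∈ S) {x : W} (hx : x ∈ S) (w : W) : w ∈ S := by
  by_cases ha : a ∈ S
  · exact c.mem_of_forall_mem_edges_imp hS ha (hc.mem_support w)
  · -- the complement of `S` is closed as well, and would contain `x`
    have hSc : ∀ x y, s(x, y) ∈ c.edges → x ∈ Sᶜ → y ∈ Sᶜ :=
      fun x y hxy hx hy => hx (hS y x (Sym2.eq_swap ▸ hxy) hy)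
    exact absurd hx (c.mem_of_forall_mem_edges_imp hSc ha (hc.mem_support x))

lemma IsCycle.eq_or_eq_of_mem_edges {a x y z w : W} {c : K.Walk a a} (hc : c.IsCycle)
    (hy : s(x, y) ∈ c.edges) (hz : s(x, z) ∈ c.edges) (hyz : y ≠ z)
    (hw : s(x, w) ∈ c.edges) : w = y ∨ w = z := by
  have hnbr : c.toSubgraph.neighborSet x = {y, z} := by
    refine (Set.eq_of_subset_of_ncard_le ?_ ?_ c.finite_neighborSet_toSubgraph).symm
    · exact Set.insert_subset (adj_toSubgraph_iff_mem_edges.mpr hy)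
        (Set.singleton_subset_iff.mpr (adj_toSubgraph_iff_mem_edges.mpr hz))
    · rw [hc.ncard_neighborSet_toSubgraph_eq_two (c.fst_mem_support_of_mem_edges hy),
        Set.ncard_pair hyz]
  have : w ∈ c.toSubgraph.neighborSet x := adj_toSubgraph_iff_mem_edges.mpr hw
  simpa [hnbr] using this

lemma IsHamiltonianCycle.eq_univ_of_triangle [DecidableEq W] {a x y z : W} {c : K.Walk a a}
    (hc : c.IsHamiltonianCycle) (hxy : x ≠ y) (hxz : x ≠ z) (hyz : y ≠ z)
    (exy : s(x, y) ∈ c.edges) (exz : s(x, z) ∈ c.edges) (eyz : s(y, z) ∈ c.edges) :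
    ({x, y, z} : Set W) = Set.univ := by
  refine Set.eq_univ_of_forall (hc.mem_of_forall_mem_edges_imp ?_ (Set.mem_insert x _))
  rintro x' y' he (rfl | rfl | rfl)
  · rcases hc.isCycle.eq_or_eq_of_mem_edges exy exz hyz he with rfl | rfl <;> simp
  · rcases hc.isCycle.eq_or_eq_of_mem_edges (Sym2.eq_swap ▸ exy) eyz hxz he with rfl | rfl <;>
      simp
  · rcases hc.isCycle.eq_or_eq_of_mem_edges (Sym2.eq_swap ▸ exz) (Sym2.eq_swap ▸ eyz) hxy he
      with rfl | rfl <;> simp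

lemma IsCycle.isHamiltonianCycle_of_forall_mem_support [DecidableEq W] {a : W}
    {c : K.Walk a a} (hc : c.IsCycle) (h : ∀ w, w ∈ c.support) : c.IsHamiltonianCycle := by
  refine ⟨hc, hc.isPath_tail.isHamiltonian_of_mem fun w => ?_⟩
  rw [support_tail_of_not_nil c hc.not_nil]
  by_cases hw : w = a
  · exact hw ▸ end_mem_tail_support hc.not_nil
  · simpa [← cons_support_tail hc.not_nil, hw] using h w

end SimpleGraph.Walk

namespace SimpleGraph

variable {W : Type*} {H : SimpleGraph W}

lemma Connected.exists_isHamiltonianCycle_of_ncard_neighborSet_eq_two [Finite W] [DecidableEq W]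
    (hH : H.Connected) (h2 : ∀ v, (H.neighborSet v).ncard = 2) :
    ∃ (a : W) (c : H.Walk a a), c.IsHamiltonianCycle ∧ {e | e ∈ c.edges} = H.edgeSet := by
  classical
  have : Fintype W := Fintype.ofFinite W
  obtain ⟨v⟩ := hH.nonempty
  have hcyc : H.IsCycles := fun w _ => h2 w
  obtain ⟨c, hc, hverts⟩ := hcyc.exists_cycle_toSubgraph_verts_eq_connectedComponentSupp
    (c := H.connectedComponentMk v) rfl (Set.nonempty_of_ncard_ne_zero (by simp [h2]))
  have hsupp : ∀ w, w ∈ c.support := fun w => by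
    rw [← Walk.mem_verts_toSubgraph, hverts, ConnectedComponent.mem_supp_iff,
      ConnectedComponent.eq]
    exact hH.preconnected w v
  refine ⟨v, c, hc.isHamiltonianCycle_of_forall_mem_support hsupp, Set.ext fun e => ?_⟩
  induction e with
  | h x y =>
    rw [Set.mem_ofPred_eq, ← Walk.adj_toSubgraph_iff_mem_edges,
      hc.adj_toSubgraph_iff_of_isCycles hcyc ((Walk.mem_verts_toSubgraph c).mpr (hsupp x)),
      mem_edgeSet]

variable {V : Type*} {G : SimpleGraph V}

lemma IsRegularOfDegree.exists_other_incident_edges [Fintype V] [DecidableEq V]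
    [DecidableRel G.Adj] (hreg : G.IsRegularOfDegree 3) {u : V} {e : G.edgeSet}
    (hu : u ∈ (e : Sym2 V)) :
    ∃ f g : G.edgeSet, f ≠ g ∧ f ≠ e ∧ g ≠ e ∧
      ∀ h : G.edgeSet, u ∈ (h : Sym2 V) ↔ h = e ∨ h = f ∨ h = g := by
  have hcard : (G.incidenceSet u).ncard = 3 := by
    rw [← Set.fintypeCard_eq_ncard, card_incidenceSet_eq_degree, hreg u]
  have hmem : (e : Sym2 V) ∈ G.incidenceSet u := ⟨e.2, hu⟩
  obtain ⟨x, y, hxy, hxy_eq⟩ := Set.ncard_eq_two.mp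
    (by rw [Set.ncard_sdiff_singleton_of_mem hmem, hcard] :
      (G.incidenceSet u \ {(e : Sym2 V)}).ncard = 2)
  have hx : x ∈ G.incidenceSet u \ {(e : Sym2 V)} := hxy_eq ▸ Set.mem_insert x _
  have hy : y ∈ G.incidenceSet u \ {(e : Sym2 V)} := hxy_eq ▸ Set.mem_insert_of_mem x rfl
  refine ⟨⟨x, hx.1.1⟩, ⟨y, hy.1.1⟩, fun h => hxy (congrArg Subtype.val h),
    fun h => hx.2 (congrArg Subtype.val h), fun h => hy.2 (congrArg Subtype.val h), fun h => ?_⟩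
  have := Set.ext_iff.mp hxy_eq h
  simp only [Set.mem_sdiff, incidenceSet, Set.mem_ofPred_eq, Set.mem_singleton_iff,
    Set.mem_insert_iff, h.2, true_and] at this
  simp only [Subtype.ext_iff]
  rcases eq_or_ne (h : Sym2 V) e with he | he
  · simp [he, hu]
  · simp [he, ← this]

lemma IsRegularOfDegree.exists_edge_not_mem [Fintype V] [DecidableEq V] [DecidableRel G.Adj]
    (hreg : G.IsRegularOfDegree 3) {u : V} {e : G.edgeSet} (hu : u ∈ (e : Sym2 V)) :
    ∃ f : G.edgeSet, u ∉ (f : Sym2 V) := by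
  have hv := Sym2.other_mem hu
  have hvu := Sym2.other_ne (G.not_isDiag_of_mem_edgeSet e.2) hu
  obtain ⟨f, _, -, hfe, -, hinc⟩ := hreg.exists_other_incident_edges hv
  have hvf : Sym2.Mem.other hu ∈ (f : Sym2 V) := (hinc f).mpr (Or.inr (Or.inl rfl))
  exact ⟨f, fun huf => hfe (Subtype.ext (Sym2.eq_of_ne_mem hvu hvf huf hv hu))⟩

lemma IsRegularOfDegree.ncard_neighborSet_deleteEdges [Fintype V] [DecidableRel G.Adj] {k : ℕ}
    (hreg : G.IsRegularOfDegree (k + 1)) {M : Set (Sym2 V)}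
    (hM : ∀ v, ∃! w, G.Adj v w ∧ s(v, w) ∈ M) (v : V) :
    ((G.deleteEdges M).neighborSet v).ncard = k := by
  obtain ⟨w, ⟨hadj, hwM⟩, huniq⟩ := hM v
  have hnbr : (G.deleteEdges M).neighborSet v = G.neighborSet v \ {w} := by
    ext x
    simp only [mem_neighborSet, deleteEdges_adj, Set.mem_sdiff, Set.mem_singleton_iff]
    exact ⟨fun ⟨hx, hxM⟩ => ⟨hx, fun hxw => hxM (hxw ▸ hwM)⟩,
      fun ⟨hx, hxw⟩ => ⟨hx, fun hxM => hxw (huniq x ⟨hx, hxM⟩)⟩⟩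
  rw [hnbr, Set.ncard_sdiff_singleton_of_mem (G.mem_neighborSet v w |>.mpr hadj),
    ← Set.fintypeCard_eq_ncard, card_neighborSet_eq_degree, hreg v, Nat.add_sub_cancel]

variable {a b c d : G.edgeSet} {u : V} {e e' : G.edgeSet}

def Walk.IsReentrantAt (p : G.lineGraph.Walk a b) (u : V) (e : G.edgeSet) : Prop :=
  ∀ f : G.edgeSet, f ≠ e → u ∈ (f : Sym2 V) → s(e, f) ∈ p.edges

def reentrantEdges (p : G.lineGraph.Walk a b) (q : G.lineGraph.Walk c d) : Set (Sym2 V) :=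
  {x | ∃ hx : x ∈ G.edgeSet, ∃ u ∈ x,
    p.IsReentrantAt u ⟨x, hx⟩ ∨ q.IsReentrantAt u ⟨x, hx⟩}

lemma mem_reentrantEdges {p : G.lineGraph.Walk a b} {q : G.lineGraph.Walk c d}
    {e : G.edgeSet} : (e : Sym2 V) ∈ reentrantEdges p q ↔
      ∃ u ∈ (e : Sym2 V), p.IsReentrantAt u e ∨ q.IsReentrantAt u e :=
  ⟨fun ⟨_, h⟩ => h, fun h => ⟨e.2, h⟩⟩

namespace Walk

variable {f g : G.edgeSet}

lemma isReentrantAt_of_mem_edges {p : G.lineGraph.Walk a b}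
    (hinc : ∀ h : G.edgeSet, u ∈ (h : Sym2 V) → h = e ∨ h = f ∨ h = g)
    (hf : s(e, f) ∈ p.edges) (hg : s(e, g) ∈ p.edges) : p.IsReentrantAt u e := by
  intro h hne hu
  rcases hinc h hu with rfl | rfl | rfl
  · exact absurd rfl hne
  · exact hf
  · exact hg

variable [Fintype V] [DecidableEq V] [DecidableRel G.Adj]

lemma IsReentrantAt.mem_of_mem_edges (hreg : G.IsRegularOfDegree 3) {p : G.lineGraph.Walk a a}
    (hp : p.IsCycle) (hu : u ∈ (e : Sym2 V)) (he : p.IsReentrantAt u e)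
    (hf : s(e, f) ∈ p.edges) : u ∈ (f : Sym2 V) := by
  obtain ⟨f₀, g₀, hfg, hf₀, hg₀, hinc⟩ := hreg.exists_other_incident_edges hu
  have hu₀ : u ∈ (f₀ : Sym2 V) := (hinc f₀).mpr (by simp)
  have hu₁ : u ∈ (g₀ : Sym2 V) := (hinc g₀).mpr (by simp)
  rcases hp.eq_or_eq_of_mem_edges (he f₀ hf₀ hu₀) (he g₀ hg₀ hu₁) hfg hf with rfl | rfl
  · exact hu₀
  · exact hu₁

lemma IsReentrantAt.isReentrantAt_of_ne (hreg : G.IsRegularOfDegree 3)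
    {p : G.lineGraph.Walk a a} {q : G.lineGraph.Walk b b} (hp : p.IsCycle)
    (hcover : G.lineGraph.edgeSet ⊆ {x | x ∈ p.edges} ∪ {x | x ∈ q.edges})
    (hu : u ∈ (e : Sym2 V)) (he : p.IsReentrantAt u e) {v : V} (hv : v ∈ (e : Sym2 V))
    (huv : u ≠ v) : q.IsReentrantAt v e := by
  intro f hfe hvf
  have hnot : s(e, f) ∉ p.edges := fun hef =>
    hfe (Subtype.ext (Sym2.eq_of_ne_mem huv (he.mem_of_mem_edges hreg hp hu hef) hvf hu hv))
  exact (hcover (lineGraph_adj_iff_exists.mpr ⟨hfe.symm, v, hv, hvf⟩)).resolve_left hnot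

lemma IsHamiltonianCycle.not_triangle_at (hreg : G.IsRegularOfDegree 3)
    {p : G.lineGraph.Walk a a} (hp : p.IsHamiltonianCycle) (hef : e ≠ f) (heg : e ≠ g)
    (hfg : f ≠ g) (he : u ∈ (e : Sym2 V)) (hf : u ∈ (f : Sym2 V)) (hg : u ∈ (g : Sym2 V)) :
    ¬ (s(e, f) ∈ p.edges ∧ s(e, g) ∈ p.edges ∧ s(f, g) ∈ p.edges) := by
  rintro ⟨pef, peg, pfg⟩
  obtain ⟨h, hh⟩ := hreg.exists_edge_not_mem he
  have := hp.eq_univ_of_triangle hef heg hfg pef peg pfg ▸ Set.mem_univ h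
  rcases this with rfl | rfl | rfl <;> contradiction

lemma IsReentrantAt.eq_of_isReentrantAt (hreg : G.IsRegularOfDegree 3)
    {p : G.lineGraph.Walk a a} (hp : p.IsHamiltonianCycle) (hu : u ∈ (e : Sym2 V))
    (hu' : u ∈ (e' : Sym2 V)) (he : p.IsReentrantAt u e) (he' : p.IsReentrantAt u e') :
    e' = e := by
  obtain ⟨f, g, hfg, hfe, hge, hinc⟩ := hreg.exists_other_incident_edges hu
  have hf : u ∈ (f : Sym2 V) := (hinc f).mpr (by simp)
  have hg : u ∈ (g : Sym2 V) := (hinc g).mpr (by simp)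
  rcases (hinc e').mp hu' with rfl | rfl | rfl
  · rfl
  · exact absurd ⟨he _ hfe hf, he _ hge hg, he' g hfg.symm hg⟩
      (hp.not_triangle_at hreg hfe.symm hge.symm hfg hu hf hg)
  · exact absurd ⟨he _ hfe hf, he _ hge hg, Sym2.eq_swap ▸ he' f hfg hf⟩
      (hp.not_triangle_at hreg hfe.symm hge.symm hfg hu hf hg)

lemma IsReentrantAt.not_isReentrantAt (hreg : G.IsRegularOfDegree 3)
    {p : G.lineGraph.Walk a a} {q : G.lineGraph.Walk b b}
    (hdisj : Disjoint {x | x ∈ p.edges} {x | x ∈ q.edges})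
    (hu : u ∈ (e : Sym2 V)) (hu' : u ∈ (e' : Sym2 V)) (he : p.IsReentrantAt u e) :
    ¬ q.IsReentrantAt u e' := by
  intro he'
  rcases eq_or_ne e' e with rfl | hne
  · obtain ⟨f, _, -, hfe, -, hinc⟩ := hreg.exists_other_incident_edges hu
    have hf : u ∈ (f : Sym2 V) := (hinc f).mpr (by simp)
    exact Set.disjoint_left.mp hdisj (he f hfe hf) (he' f hfe hf)
  · exact Set.disjoint_left.mp hdisj (he e' hne hu') (Sym2.eq_swap ▸ he' e hne.symm hu)

end Walk

lemma exists_isReentrantAt [Fintype V] [DecidableEq V] [DecidableRel G.Adj]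
    (hreg : G.IsRegularOfDegree 3) {p : G.lineGraph.Walk a a} {q : G.lineGraph.Walk b b}
    (hcover : G.lineGraph.edgeSet ⊆ {x | x ∈ p.edges} ∪ {x | x ∈ q.edges}) (u : V) :
    ∃ e : G.edgeSet, u ∈ (e : Sym2 V) ∧ (p.IsReentrantAt u e ∨ q.IsReentrantAt u e) := by
  obtain ⟨w, huw⟩ := (G.degree_pos_iff_exists_adj u).mp (by rw [hreg u]; norm_num)
  set e : G.edgeSet := ⟨s(u, w), huw⟩
  have he : u ∈ (e : Sym2 V) := Sym2.mem_mk_left u w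
  obtain ⟨f, g, hfg, hfe, hge, hinc⟩ := hreg.exists_other_incident_edges he
  have hf : u ∈ (f : Sym2 V) := (hinc f).mpr (by simp)
  have hg : u ∈ (g : Sym2 V) := (hinc g).mpr (by simp)
  have inc_e : ∀ h : G.edgeSet, u ∈ (h : Sym2 V) → h = e ∨ h = f ∨ h = g := fun h hh =>
    (hinc h).mp hh
  have inc_f : ∀ h : G.edgeSet, u ∈ (h : Sym2 V) → h = f ∨ h = e ∨ h = g := fun h hh => by
    have := inc_e h hh; tauto
  have inc_g : ∀ h : G.edgeSet, u ∈ (h : Sym2 V) → h = g ∨ h = e ∨ h = f := fun h hh => by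
    have := inc_e h hh; tauto
  have cover : ∀ {x y : G.edgeSet}, x ≠ y → u ∈ (x : Sym2 V) → u ∈ (y : Sym2 V) →
      s(x, y) ∈ p.edges ∨ s(x, y) ∈ q.edges := fun hxy hx hy =>
    hcover (lineGraph_adj_iff_exists.mpr ⟨hxy, u, hx, hy⟩)
  rcases cover hfe.symm he hf with ef | ef <;> rcases cover hge.symm he hg with eg | eg
  · exact ⟨e, he, Or.inl (Walk.isReentrantAt_of_mem_edges inc_e ef eg)⟩
  · rcases cover hfg hf hg with fg | fg
    · exact ⟨f, hf, Or.inl (Walk.isReentrantAt_of_mem_edges inc_f (Sym2.eq_swap ▸ ef) fg)⟩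
    · exact ⟨g, hg, Or.inr (Walk.isReentrantAt_of_mem_edges inc_g (Sym2.eq_swap ▸ eg)
        (Sym2.eq_swap ▸ fg))⟩
  · rcases cover hfg hf hg with fg | fg
    · exact ⟨g, hg, Or.inl (Walk.isReentrantAt_of_mem_edges inc_g (Sym2.eq_swap ▸ eg)
        (Sym2.eq_swap ▸ fg))⟩
    · exact ⟨f, hf, Or.inr (Walk.isReentrantAt_of_mem_edges inc_f (Sym2.eq_swap ▸ ef) fg)⟩
  · exact ⟨e, he, Or.inr (Walk.isReentrantAt_of_mem_edges inc_e ef eg)⟩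

structure IsHamiltonianDecomposition (p : G.lineGraph.Walk a a) (q : G.lineGraph.Walk b b)
    [DecidableEq V] : Prop where
  left : p.IsHamiltonianCycle
  right : q.IsHamiltonianCycle
  disjoint : Disjoint {x | x ∈ p.edges} {x | x ∈ q.edges}
  union_eq : {x | x ∈ p.edges} ∪ {x | x ∈ q.edges} = G.lineGraph.edgeSet

namespace IsHamiltonianDecomposition

variable [DecidableEq V] {p : G.lineGraph.Walk a a} {q : G.lineGraph.Walk b b}

lemma symm (h : IsHamiltonianDecomposition p q) : IsHamiltonianDecomposition q p :=
  ⟨h.right, h.left, h.disjoint.symm, Set.union_comm _ _ ▸ h.union_eq⟩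

variable [Fintype V] [DecidableRel G.Adj]

lemma existsUnique_isReentrantAt (h : IsHamiltonianDecomposition p q)
    (hreg : G.IsRegularOfDegree 3) (u : V) :
    ∃! e : G.edgeSet, u ∈ (e : Sym2 V) ∧ (p.IsReentrantAt u e ∨ q.IsReentrantAt u e) := by
  obtain ⟨e, hu, he⟩ := exists_isReentrantAt hreg h.union_eq.ge u
  refine ⟨e, ⟨hu, he⟩, fun e' ⟨hu', he'⟩ => ?_⟩
  rcases he with he | he <;> rcases he' with he' | he'
  · exact he.eq_of_isReentrantAt hreg h.left hu hu' he'
  · exact absurd he' (he.not_isReentrantAt hreg h.disjoint hu hu')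
  · exact absurd he' (he.not_isReentrantAt hreg h.symm.disjoint hu hu')
  · exact he.eq_of_isReentrantAt hreg h.right hu hu' he'

lemma isReentrantAt_of_mem_reentrantEdges (h : IsHamiltonianDecomposition p q)
    (hreg : G.IsRegularOfDegree 3) (he : (e : Sym2 V) ∈ reentrantEdges p q) {v : V}
    (hv : v ∈ (e : Sym2 V)) : p.IsReentrantAt v e ∨ q.IsReentrantAt v e := by
  obtain ⟨u, hu, hre⟩ := mem_reentrantEdges.mp he
  rcases eq_or_ne u v with rfl | huv
  · exact hre
  rcases hre with hre | hre
  · exact Or.inr (hre.isReentrantAt_of_ne hreg h.left.isCycle h.union_eq.ge hu hv huv)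
  · exact Or.inl (hre.isReentrantAt_of_ne hreg h.right.isCycle h.symm.union_eq.ge hu hv huv)

lemma exists_isReentrantAt_left_of_mem_reentrantEdges (h : IsHamiltonianDecomposition p q)
    (hreg : G.IsRegularOfDegree 3) (he : (e : Sym2 V) ∈ reentrantEdges p q) :
    ∃ u ∈ (e : Sym2 V), p.IsReentrantAt u e := by
  obtain ⟨u, hu, hre⟩ := mem_reentrantEdges.mp he
  have hv := Sym2.other_mem hu
  rcases h.isReentrantAt_of_mem_reentrantEdges hreg he hv with hre | hre
  · exact ⟨_, hv, hre⟩
  · have hvu := Sym2.other_ne (G.not_isDiag_of_mem_edgeSet e.2) hu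
    exact ⟨u, hu, hre.isReentrantAt_of_ne hreg h.right.isCycle h.symm.union_eq.ge hv hu hvu⟩

lemma existsUnique_adj_mem_reentrantEdges (h : IsHamiltonianDecomposition p q)
    (hreg : G.IsRegularOfDegree 3) (v : V) :
    ∃! w, G.Adj v w ∧ s(v, w) ∈ reentrantEdges p q := by
  obtain ⟨e, ⟨hv, hre⟩, huniq⟩ := h.existsUnique_isReentrantAt hreg v
  have hew : s(v, Sym2.Mem.other hv) = e := Sym2.other_spec hv
  refine ⟨Sym2.Mem.other hv, ⟨G.mem_edgeSet.mp (by rw [hew]; exact e.2), ?_⟩, ?_⟩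
  · rw [hew]
    exact mem_reentrantEdges.mpr ⟨v, hv, hre⟩
  · rintro w ⟨hadj, hw⟩
    have hv' : v ∈ s(v, w) := Sym2.mem_mk_left v w
    have := huniq ⟨s(v, w), hadj⟩ ⟨hv', h.isReentrantAt_of_mem_reentrantEdges hreg hw hv'⟩
    have hvw : s(v, w) = s(v, Sym2.Mem.other hv) := by
      rw [hew]; exact congrArg Subtype.val this
    exact Sym2.congr_right.mp hvw

lemma exists_reachable_of_mem_edges (h : IsHamiltonianDecomposition p q)
    (hreg : G.IsRegularOfDegree 3) {e f : G.edgeSet} (hef : s(e, f) ∈ p.edges)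
    (hu : u ∈ (e : Sym2 V)) (hue : (e : Sym2 V) ∈ reentrantEdges p q → p.IsReentrantAt u e) :
    ∃ w ∈ (f : Sym2 V), ((f : Sym2 V) ∈ reentrantEdges p q → p.IsReentrantAt w f) ∧
      (G.deleteEdges (reentrantEdges p q)).Reachable u w := by
  obtain ⟨hne, w, hwe, hwf⟩ := lineGraph_adj_iff_exists.mp (p.edges_subset_edgeSet hef)
  have hne' : (e : Sym2 V) ≠ f := fun h => hne (Subtype.ext h)
  refine ⟨w, hwf, fun hfM => ?_, ?_⟩
  · obtain ⟨x, hxf, hx⟩ := h.exists_isReentrantAt_left_of_mem_reentrantEdges hreg hfM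
    have hxe := hx.mem_of_mem_edges hreg h.left.isCycle hxf (Sym2.eq_swap ▸ hef)
    rwa [← Sym2.eq_of_mem_of_mem_of_ne hne' hxe hxf hwe hwf]
  · by_cases heM : (e : Sym2 V) ∈ reentrantEdges p q
    · have huf := (hue heM).mem_of_mem_edges hreg h.left.isCycle hu hef
      rw [Sym2.eq_of_mem_of_mem_of_ne hne' hu huf hwe hwf]
    · rcases eq_or_ne u w with rfl | huw
      · rfl
      have he : (e : Sym2 V) = s(u, w) := (Sym2.mem_and_mem_iff huw).mp ⟨hu, hwe⟩
      refine Adj.reachable (deleteEdges_adj.mpr ⟨?_, he ▸ heM⟩)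
      exact G.mem_edgeSet.mp (he ▸ e.2)

lemma connected_deleteEdges_reentrantEdges (h : IsHamiltonianDecomposition p q)
    (hreg : G.IsRegularOfDegree 3) : (G.deleteEdges (reentrantEdges p q)).Connected := by
  set M := reentrantEdges p q
  have hnbr : ∀ v, ((G.deleteEdges M).neighborSet v).Nonempty := fun v =>
    Set.nonempty_of_ncard_ne_zero (by
      rw [hreg.ncard_neighborSet_deleteEdges (h.existsUnique_adj_mem_reentrantEdges hreg) v]
      norm_num)
  have : Nonempty V := ⟨(a : Sym2 V).out.1⟩
  refine ⟨fun x y => ?_⟩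
  obtain ⟨x', hx⟩ := hnbr x
  obtain ⟨y', hy⟩ := hnbr y
  -- following `p` from the edge `s(x, x')`, every edge has an endpoint reachable from `x`
  have hall := h.left.mem_of_forall_mem_edges_imp
    (S := {f : G.edgeSet | ∃ w ∈ (f : Sym2 V), ((f : Sym2 V) ∈ M → p.IsReentrantAt w f) ∧
      (G.deleteEdges M).Reachable x w})
    (fun e f hef ⟨u, hu, hue, hxu⟩ =>
      let ⟨w, hw, hwf, huw⟩ := h.exists_reachable_of_mem_edges hreg hef hu hue
      ⟨w, hw, hwf, hxu.trans huw⟩)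
    (x := ⟨s(x, x'), (deleteEdges_adj.mp hx).1⟩)
    ⟨x, Sym2.mem_mk_left x x', fun hM => absurd hM (deleteEdges_adj.mp hx).2, .refl x⟩
  obtain ⟨w, hw, -, hxw⟩ := hall ⟨s(y, y'), (deleteEdges_adj.mp hy).1⟩
  rcases Sym2.mem_iff.mp hw with rfl | rfl
  · exact hxw
  · exact hxw.trans hy.symm.reachable

end IsHamiltonianDecomposition

end SimpleGraph

open SimpleGraph

theorem reentrant_edges_perfect_matching {V : Type*} [Fintype V] [DecidableEq V]
    (G : SimpleGraph V) [DecidableRel G.Adj]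
    (hreg : G.IsRegularOfDegree 3)
    {a b : G.edgeSet}
    (p : (G.lineGraph).Walk a a) (q : (G.lineGraph).Walk b b)
    (hp : p.IsHamiltonianCycle) (hq : q.IsHamiltonianCycle)
    (hdisj : Disjoint {x | x ∈ p.edges} {x | x ∈ q.edges})
    (hunion : {x | x ∈ p.edges} ∪ {x | x ∈ q.edges} = (G.lineGraph).edgeSet)
    (M : Set (Sym2 V))
    (hM : M = {x | ∃ hx : x ∈ G.edgeSet, ∃ u ∈ x,
      (∀ f : G.edgeSet, f ≠ ⟨x, hx⟩ → u ∈ (f : Sym2 V) →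
        s((⟨x, hx⟩ : G.edgeSet), f) ∈ p.edges) ∨
      (∀ f : G.edgeSet, f ≠ ⟨x, hx⟩ → u ∈ (f : Sym2 V) →
        s((⟨x, hx⟩ : G.edgeSet), f) ∈ q.edges)}) :
    (∀ v : V, ∃! w : V, G.Adj v w ∧ s(v, w) ∈ M) ∧
    ∃ (c0 : V) (c : G.Walk c0 c0), c.IsHamiltonianCycle ∧
      {x | x ∈ c.edges} = G.edgeSet \ M := by
  have hM : M = reentrantEdges p q := hM
  subst hM
  have h : IsHamiltonianDecomposition p q := ⟨hp, hq, hdisj, hunion⟩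
  have hmatching := h.existsUnique_adj_mem_reentrantEdges hreg
  obtain ⟨c0, c, hc, hedges⟩ :=
    Connected.exists_isHamiltonianCycle_of_ncard_neighborSet_eq_two
      (h.connected_deleteEdges_reentrantEdges hreg) (hreg.ncard_neighborSet_deleteEdges hmatching)
  refine ⟨hmatching, c0, c.mapLe (G.deleteEdges_le _), hc.map Function.bijective_id, ?_⟩
  rw [Walk.edges_mapLe_eq_edges, hedges, edgeSet_deleteEdges]
end

section
/- Let G be a (4,2)-biregular simple graph and suppose the edge set of L(G) is the disjoint union of the edge sets of two Hamiltonian cycles H1 and H2 of L(G). Then for every degree-4 vertex u of G, and for each i ∈ {1,2}, the edges of Hi joining two of the four edges of G incident to u form a Hamiltonian path of the 4-clique of L(G) spanned by those four edges; in particular, Hi uses exactly two of the L(G)-edges leaving that 4-clique. -/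
open SimpleGraph

/-!
Let `K` be the four edges of `G` at `u`. Each `e ∈ K` has exactly one neighbour in `L(G)` outside
`K`, namely the other edge at the degree-2 end of `e`. A Hamiltonian cycle has degree 2 at every
vertex, so the part of it inside `K` has degree 1 at the vertices of `K` where the cycle leaves `K`
and degree 2 at the others. By the handshake lemma the number of such exits is even; it is positive
since the cycle does leave `K`, and below 4 since the other, edge-disjoint, cycle leaves `K` too.
Hence there are exactly two exits, the cycle has degrees `1, 2, 2, 1` inside `K`, and on four
vertices this degree sequence is only realised by a path.
-/

open Finset

lemma Finset.exists_of_subset_of_card_eq_two_of_card_eq_four {W : Type*} [DecidableEq W]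
    {X K : Finset W} (hXK : X ⊆ K) (hK : #K = 4) (hX : #X = 2) :
    ∃ a b c d, a ≠ d ∧ b ≠ c ∧ a ∈ X ∧ d ∈ X ∧ b ∈ K \ X ∧ c ∈ K \ X ∧
      K = {a, b, c, d} := by
  obtain ⟨a, d, had, hX⟩ := card_eq_two.mp hX
  obtain ⟨b, c, hbc, hY⟩ := card_eq_two.mp (show #(K \ X) = 2 by
    rw [card_sdiff_of_subset hXK]; omega)
  refine ⟨a, b, c, d, had, hbc, by simp [hX], by simp [hX], by simp [hY], by simp [hY], ?_⟩
  rw [← union_sdiff_of_subset hXK, hY, hX]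
  ext; simp; tauto

namespace SimpleGraph

section Degrees

variable {W : Type*} [Fintype W] {T : SimpleGraph W} [DecidableRel T.Adj]

lemma eq_of_adj_of_degree_eq_one {x y z : W} (hx : T.degree x = 1) (hy : T.Adj x y)
    (hz : T.Adj x z) : z = y := by
  obtain ⟨w, -, hw⟩ := degree_eq_one_iff_existsUnique_adj.mp hx
  rw [hw z hz, hw y hy]

variable [DecidableEq W]

lemma eq_or_eq_of_adj_of_degree_eq_two {x y z w : W} (hx : T.degree x = 2) (hy : T.Adj x y)
    (hz : T.Adj x z) (hyz : y ≠ z) (hw : T.Adj x w) : w = y ∨ w = z := by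
  have hN : {y, z} = T.neighborFinset x :=
    eq_of_subset_of_card_le (by simp [insert_subset_iff, hy, hz])
      (by rw [card_neighborFinset_eq_degree, hx, card_pair hyz])
  simpa [← hN] using (mem_neighborFinset T x w).mpr hw

lemma adj_of_degree_eq_two_of_forall_adj {x y z : W} (hx : T.degree x = 2)
    (hsub : ∀ w, T.Adj x w → w = y ∨ w = z) : y ≠ z ∧ T.Adj x y ∧ T.Adj x z := by
  have hN : T.neighborFinset x = {y, z} :=
    eq_of_subset_of_card_le (fun w hw => by simpa using hsub w (by simpa using hw))
      (by rw [card_neighborFinset_eq_degree, hx]; exact card_le_two)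
  refine ⟨fun hyz => ?_, by simp [← mem_neighborFinset, hN],
    by simp [← mem_neighborFinset, hN]⟩
  rw [← card_neighborFinset_eq_degree, hN, hyz, pair_eq_singleton, card_singleton] at hx
  exact absurd hx (by norm_num)

variable {a b c d : W}

lemma adj_adj_of_adj_of_degree_eq_one (hbc : b ≠ c)
    (hT : ∀ x y, T.Adj x y → y = a ∨ y = b ∨ y = c ∨ y = d)
    (ha : T.degree a = 1) (hc : T.degree c = 2) (hab : T.Adj a b) : T.Adj b c ∧ T.Adj c d := by
  obtain ⟨-, hcb, hcd⟩ := adj_of_degree_eq_two_of_forall_adj (y := b) (z := d) hc fun w hw => by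
    rcases hT c w hw with rfl | rfl | rfl | rfl
    exacts [absurd (eq_of_adj_of_degree_eq_one ha hab hw.symm) hbc.symm, .inl rfl,
      absurd hw T.irrefl, .inr rfl]
  exact ⟨hcb.symm, hcd⟩

lemma adj_path_of_degrees (hab : a ≠ b) (hbc : b ≠ c) (hbd : b ≠ d)
    (hT : ∀ x y, T.Adj x y → y = a ∨ y = b ∨ y = c ∨ y = d)
    (ha : T.degree a = 1) (hb : T.degree b = 2) (hc : T.degree c = 2) (hd : T.degree d = 1) :
    (T.Adj a b ∧ T.Adj b c ∧ T.Adj c d) ∨ (T.Adj a c ∧ T.Adj c b ∧ T.Adj b d) := by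
  obtain ⟨y, hy, -⟩ := degree_eq_one_iff_existsUnique_adj.mp ha
  rcases hT a y hy with rfl | rfl | rfl | rfl
  · exact absurd hy T.irrefl
  · exact .inl ⟨hy, adj_adj_of_adj_of_degree_eq_one hbc hT ha hc hy⟩
  · exact .inr ⟨hy, adj_adj_of_adj_of_degree_eq_one hbc.symm (by grind) ha hb hy⟩
  · obtain ⟨hcc, -⟩ := adj_of_degree_eq_two_of_forall_adj (y := c) (z := c) hb fun w hw => by
      rcases hT b w hw with rfl | rfl | rfl | rfl
      exacts [absurd (eq_of_adj_of_degree_eq_one ha hy hw.symm) hbd, absurd hw T.irrefl,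
        .inl rfl, absurd (eq_of_adj_of_degree_eq_one hd hy.symm hw.symm) hab.symm]
    exact absurd rfl hcc

lemma mk_eq_path_edge_of_adj (hac : a ≠ c) (hbd : b ≠ d)
    (hT : ∀ x y, T.Adj x y → y = a ∨ y = b ∨ y = c ∨ y = d)
    (ha : T.degree a = 1) (hb : T.degree b = 2) (hc : T.degree c = 2) (hd : T.degree d = 1)
    (hab : T.Adj a b) (hbc : T.Adj b c) (hcd : T.Adj c d) {x y : W} (hxy : T.Adj x y) :
    s(x, y) = s(a, b) ∨ s(x, y) = s(b, c) ∨ s(x, y) = s(c, d) := by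
  rcases hT y x hxy.symm with rfl | rfl | rfl | rfl
  · rw [eq_of_adj_of_degree_eq_one ha hab hxy]; exact .inl rfl
  · rcases eq_or_eq_of_adj_of_degree_eq_two hb hab.symm hbc hac hxy with rfl | rfl
    exacts [.inl Sym2.eq_swap, .inr (.inl rfl)]
  · rcases eq_or_eq_of_adj_of_degree_eq_two hc hbc.symm hcd hbd hxy with rfl | rfl
    exacts [.inr (.inl Sym2.eq_swap), .inr (.inr rfl)]
  · rw [eq_of_adj_of_degree_eq_one hd hcd.symm hxy]; exact .inr (.inr Sym2.eq_swap)

end Degrees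

section LineGraph

variable {V : Type*} [Fintype V] [DecidableEq V] (G : SimpleGraph V) [DecidableRel G.Adj]

lemma card_filter_mem_edgeSet_eq_degree (u : V) :
    #{e : G.edgeSet | u ∈ (e : Sym2 V)} = G.degree u := by
  rw [← card_incidenceFinset_eq_degree, ← card_map (Function.Embedding.subtype _)]
  congr 1
  ext z
  simp [mem_incidenceFinset, incidenceSet, and_comm]

lemma exists_lineGraph_adj_eq_of_degree_eq_two {u w : V} {e : G.edgeSet}
    (he : (e : Sym2 V) = s(u, w)) (hw : G.degree w = 2) :
    ∃ f : G.edgeSet, u ∉ (f : Sym2 V) ∧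
      ∀ e' : G.edgeSet, u ∉ (e' : Sym2 V) → G.lineGraph.Adj e e' → e' = f := by
  have huw : u ≠ w := G.ne_of_adj (by rw [← mem_edgeSet, ← he]; exact e.2)
  have hwe : w ∈ (e : Sym2 V) := he ▸ Sym2.mem_mk_right u w
  have hew : (e : Sym2 V) ∈ G.incidenceFinset w := (G.mem_incidenceFinset _ _).mpr ⟨e.2, hwe⟩
  obtain ⟨f, hfw, hfe⟩ := exists_mem_ne (s := G.incidenceFinset w)
    (by rw [card_incidenceFinset_eq_degree, hw]; norm_num) (e : Sym2 V)
  have hinc : G.incidenceFinset w = {(e : Sym2 V), f} :=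
    (eq_of_subset_of_card_le (by simp [insert_subset_iff, hew, hfw])
      (by rw [card_incidenceFinset_eq_degree, hw, card_pair hfe.symm])).symm
  obtain ⟨hf, hwf⟩ := (G.mem_incidenceFinset _ _).mp hfw
  refine ⟨⟨f, hf⟩,
    fun hu => hfe (Sym2.eq_of_ne_mem huw hu hwf (he ▸ Sym2.mem_mk_left u w) hwe),
    fun e' hue' hadj => ?_⟩
  obtain ⟨hne, x, hxe, hxe'⟩ := lineGraph_adj_iff_exists.mp hadj
  obtain rfl : x = w := by
    rw [he, Sym2.mem_iff] at hxe
    exact hxe.resolve_left (by rintro rfl; exact hue' hxe')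
  have : (e' : Sym2 V) ∈ G.incidenceFinset x := (G.mem_incidenceFinset _ _).mpr ⟨e'.2, hxe'⟩
  rw [hinc, mem_insert, mem_singleton] at this
  exact Subtype.ext (this.resolve_left fun h => hne (Subtype.ext h).symm)

end LineGraph

variable {W : Type*} {H : SimpleGraph W}

def IsExitMap (H : SimpleGraph W) (K : Finset W) (f : W → W) : Prop :=
  ∀ x ∈ K, f x ∉ K ∧ ∀ y ∉ K, H.Adj x y → y = f x

namespace Walk

lemma spanningCoe_induce_toSubgraph_adj {u v : W} {p : H.Walk u v} {K : Finset W} {x y : W} :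
    (p.toSubgraph.induce K).spanningCoe.Adj x y ↔
      x ∈ K ∧ y ∈ K ∧ s(x, y) ∈ p.edges := by
  simp [adj_toSubgraph_iff_mem_edges]

lemma exists_isPath_of_mem_edges {u v : W} (p : H.Walk u v) {K : Set W} {a b c d : W}
    (hab : a ≠ b) (hac : a ≠ c) (had : a ≠ d) (hbc : b ≠ c) (hbd : b ≠ d) (hcd : c ≠ d)
    (hK : K = {a, b, c, d}) (hpab : s(a, b) ∈ p.edges) (hpbc : s(b, c) ∈ p.edges)
    (hpcd : s(c, d) ∈ p.edges)
    (honly : ∀ x ∈ K, ∀ y ∈ K, s(x, y) ∈ p.edges →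
      s(x, y) = s(a, b) ∨ s(x, y) = s(b, c) ∨ s(x, y) = s(c, d)) :
    ∃ P : H.Walk a d, P.IsPath ∧ {z | z ∈ P.support} = K ∧
      {z | z ∈ P.edges} = {z | z ∈ p.edges ∧ ∀ x ∈ z, x ∈ K} := by
  subst hK
  refine ⟨.cons (p.adj_of_mem_edges hpab) (.cons (p.adj_of_mem_edges hpbc)
    (.cons (p.adj_of_mem_edges hpcd) .nil)), ?_, ?_, ?_⟩
  · simp [isPath_def, hab, hac, had, hbc, hbd, hcd]
  · ext; simp
  · ext z
    simp only [edges_cons, edges_nil, List.mem_cons, List.not_mem_nil, or_false,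
      Set.mem_ofPred_eq]
    constructor
    · rintro (rfl | rfl | rfl) <;> simp [hpab, hpbc, hpcd]
    · induction z using Sym2.ind with
      | _ x y =>
        simp only [Sym2.mem_iff, forall_eq_or_imp, forall_eq]
        exact fun ⟨hp, hx, hy⟩ => honly x hx y hy hp

variable [DecidableEq W] {v w : W} {p : H.Walk v v} {q : H.Walk w w} {K : Finset W} {f : W → W}

lemma IsHamiltonianCycle.exists_mem_edges_of_mem_of_notMem (hp : p.IsHamiltonianCycle)
    {S : Set W} {x y : W} (hx : x ∈ S) (hy : y ∉ S) :
    ∃ x' ∈ S, ∃ y' ∉ S, s(x', y') ∈ p.edges := by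
  have hrot := (isHamiltonianCycle_rotate (hp.mem_support x)).mpr hp
  obtain ⟨d, hd, hdS⟩ := ((p.rotate x (hp.mem_support x)).takeUntil y
    (hrot.mem_support y)).exists_boundary_dart S hx hy
  have hd' : d ∈ p.darts :=
    (p.rotate_darts x _).mem_iff.mp (darts_takeUntil_subset_darts _ _ hd)
  exact ⟨d.fst, hdS.1, d.snd, hdS.2, p.edges_eq_map_darts ▸ List.mem_map_of_mem hd'⟩

def exitsVia (p : H.Walk v v) (K : Finset W) (f : W → W) : Finset W :=
  {x ∈ K | s(x, f x) ∈ p.edges}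

lemma exitsVia_subset : p.exitsVia K f ⊆ K := filter_subset _ _

lemma ncard_crossing_eq_card_exitsVia (hf : H.IsExitMap K f) :
    {z | z ∈ p.edges ∧ ∃ x y, z = s(x, y) ∧ x ∈ K ∧ y ∉ K}.ncard =
      #(p.exitsVia K f) := by
  have hcross : {z | z ∈ p.edges ∧ ∃ x y, z = s(x, y) ∧ x ∈ K ∧ y ∉ K} =
      (fun x => s(x, f x)) '' ↑(p.exitsVia K f) := by
    ext z
    constructor
    · rintro ⟨hz, x, y, rfl, hx, hy⟩
      obtain rfl := (hf x hx).2 y hy (p.adj_of_mem_edges hz)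
      exact ⟨x, mem_filter.mpr ⟨hx, hz⟩, rfl⟩
    · rintro ⟨x, hx, rfl⟩
      obtain ⟨hxK, hxp⟩ := mem_filter.mp hx
      exact ⟨hxp, x, f x, rfl, hxK, (hf x hxK).1⟩
  rw [hcross, Set.InjOn.ncard_image, Set.ncard_coe_finset]
  intro x hx x' hx' h
  rcases Sym2.eq_iff.mp h with ⟨h1, -⟩ | ⟨h1, -⟩
  · exact h1
  · exact absurd (h1 ▸ (mem_filter.mp hx).1) (hf x' (mem_filter.mp hx').1).1

lemma IsHamiltonianCycle.exitsVia_nonempty (hp : p.IsHamiltonianCycle) (hf : H.IsExitMap K f)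
    (hK : K.Nonempty) : (p.exitsVia K f).Nonempty := by
  obtain ⟨x, hx⟩ := hK
  obtain ⟨x', hx', y, hy, hxy⟩ := hp.exists_mem_edges_of_mem_of_notMem (S := K) hx (hf x hx).1
  obtain rfl := (hf x' hx').2 y hy (p.adj_of_mem_edges hxy)
  exact ⟨x', mem_filter.mpr ⟨hx', hxy⟩⟩

lemma card_exitsVia_lt (hq : q.IsHamiltonianCycle)
    (hdisj : Disjoint {z | z ∈ p.edges} {z | z ∈ q.edges}) (hf : H.IsExitMap K f)
    (hK : K.Nonempty) : #(p.exitsVia K f) < #K := by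
  obtain ⟨x, hx⟩ := hq.exitsVia_nonempty hf hK
  obtain ⟨hxK, hxq⟩ := mem_filter.mp hx
  refine card_lt_card ⟨exitsVia_subset, fun hsub => ?_⟩
  exact Set.disjoint_left.mp hdisj (mem_filter.mp (hsub hxK)).2 hxq

variable [Fintype W]

lemma IsHamiltonianCycle.card_filter_mem_edges (hp : p.IsHamiltonianCycle) (x : W) :
    #{y | s(x, y) ∈ p.edges} = 2 := by
  rw [← hp.isCycle.ncard_neighborSet_toSubgraph_eq_two (hp.mem_support x),
    ← Set.ncard_coe_finset]
  congr 1
  ext y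
  simp [adj_toSubgraph_iff_mem_edges]

lemma IsHamiltonianCycle.card_filter_mem_edges_add_ite_eq_two (hp : p.IsHamiltonianCycle)
    (hf : H.IsExitMap K f) {x : W} (hx : x ∈ K) :
    #{y ∈ K | s(x, y) ∈ p.edges} + (if x ∈ p.exitsVia K f then 1 else 0) = 2 := by
  rw [← hp.card_filter_mem_edges x,
    ← card_filter_add_card_filter_not (s := {y | s(x, y) ∈ p.edges}) (· ∈ K)]
  congr 1
  · congr 1; ext y; simp [and_comm]
  · have hxf : x ∈ p.exitsVia K f ↔ s(x, f x) ∈ p.edges := by simp [exitsVia, hx]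
    split_ifs with h
    · refine (card_eq_one.mpr ⟨f x, ?_⟩).symm
      ext y
      simp only [filter_filter, mem_filter, mem_univ, true_and, mem_singleton]
      refine ⟨fun ⟨hy, hyK⟩ => (hf x hx).2 y hyK (p.adj_of_mem_edges hy), ?_⟩
      rintro rfl
      exact ⟨hxf.mp h, (hf x hx).1⟩
    · refine (card_eq_zero.mpr (filter_eq_empty_iff.mpr fun y hy hyK => ?_)).symm
      replace hy := (mem_filter.mp hy).2
      obtain rfl := (hf x hx).2 y hyK (p.adj_of_mem_edges hy)
      exact h (hxf.mpr hy)

lemma degree_spanningCoe_induce_toSubgraph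
    [DecidableRel (p.toSubgraph.induce K).spanningCoe.Adj] (x : W) :
    (p.toSubgraph.induce K).spanningCoe.degree x =
      if x ∈ K then #{y ∈ K | s(x, y) ∈ p.edges} else 0 := by
  rw [← card_neighborFinset_eq_degree]
  split_ifs with hx
  · congr 1
    ext y
    rw [mem_neighborFinset, spanningCoe_induce_toSubgraph_adj, mem_filter]
    exact and_iff_right hx
  · rw [card_eq_zero, eq_empty_iff_forall_notMem]
    intro y hy
    rw [mem_neighborFinset, spanningCoe_induce_toSubgraph_adj] at hy
    exact hx hy.1

lemma IsHamiltonianCycle.degree_spanningCoe_induce_toSubgraph_of_mem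
    [DecidableRel (p.toSubgraph.induce K).spanningCoe.Adj] (hp : p.IsHamiltonianCycle)
    (hf : H.IsExitMap K f) {x : W} (hx : x ∈ K) :
    (p.toSubgraph.induce K).spanningCoe.degree x = if x ∈ p.exitsVia K f then 1 else 2 := by
  have := hp.card_filter_mem_edges_add_ite_eq_two hf hx
  rw [degree_spanningCoe_induce_toSubgraph, if_pos hx]
  split_ifs at this ⊢ <;> omega

lemma IsHamiltonianCycle.even_card_exitsVia (hp : p.IsHamiltonianCycle) (hf : H.IsExitMap K f) :
    Even #(p.exitsVia K f) := by
  classical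
  convert (p.toSubgraph.induce K).spanningCoe.even_card_odd_degree_vertices using 2
  ext x
  rw [mem_filter (s := univ)]
  by_cases hx : x ∈ K
  · rw [hp.degree_spanningCoe_induce_toSubgraph_of_mem hf hx]
    split_ifs with h <;> simp [h]
  · rw [degree_spanningCoe_induce_toSubgraph, if_neg hx]
    simp [exitsVia, hx]

lemma IsHamiltonianCycle.card_exitsVia_eq_two (hp : p.IsHamiltonianCycle)
    (hq : q.IsHamiltonianCycle) (hdisj : Disjoint {z | z ∈ p.edges} {z | z ∈ q.edges})
    (hf : H.IsExitMap K f) (hK : #K = 4) : #(p.exitsVia K f) = 2 := by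
  have hKne : K.Nonempty := card_pos.mp (by omega)
  have hpos := (hp.exitsVia_nonempty hf hKne).card_pos
  have hlt := card_exitsVia_lt hq hdisj hf hKne
  obtain ⟨k, hk⟩ := hp.even_card_exitsVia hf
  omega

lemma IsHamiltonianCycle.exists_isPath_of_card_exitsVia_eq_two (hp : p.IsHamiltonianCycle)
    (hf : H.IsExitMap K f) (hK : #K = 4) (hX : #(p.exitsVia K f) = 2) :
    ∃ (x y : W) (P : H.Walk x y), x ≠ y ∧ x ∈ K ∧ y ∈ K ∧ P.IsPath ∧
      {z | z ∈ P.support} = ↑K ∧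
      {z | z ∈ P.edges} = {z | z ∈ p.edges ∧ ∀ x ∈ z, x ∈ K} := by
  classical
  set T := (p.toSubgraph.induce K).spanningCoe
  obtain ⟨a, b, c, d, had, hbc, hXa, hXd, hXb, hXc, hKabcd⟩ :=
    exists_of_subset_of_card_eq_two_of_card_eq_four exitsVia_subset hK hX
  rw [mem_sdiff] at hXb hXc
  have ha := hp.degree_spanningCoe_induce_toSubgraph_of_mem hf (exitsVia_subset hXa)
  have hb := hp.degree_spanningCoe_induce_toSubgraph_of_mem hf hXb.1
  have hc := hp.degree_spanningCoe_induce_toSubgraph_of_mem hf hXc.1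
  have hd := hp.degree_spanningCoe_induce_toSubgraph_of_mem hf (exitsVia_subset hXd)
  rw [if_pos hXa] at ha
  rw [if_pos hXd] at hd
  rw [if_neg hXb.2] at hb
  rw [if_neg hXc.2] at hc
  have hab : a ≠ b := by rintro rfl; exact hXb.2 hXa
  have hac : a ≠ c := by rintro rfl; exact hXc.2 hXa
  have hbd : b ≠ d := by rintro rfl; exact hXb.2 hXd
  have hcd : c ≠ d := by rintro rfl; exact hXc.2 hXd
  have hT : ∀ x y, T.Adj x y → y = a ∨ y = b ∨ y = c ∨ y = d := fun x y h => by
    simpa [hKabcd] using (spanningCoe_induce_toSubgraph_adj.mp h).2.1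
  have hedge : ∀ {x y}, T.Adj x y → s(x, y) ∈ p.edges :=
    fun h => (spanningCoe_induce_toSubgraph_adj.mp h).2.2
  have hinside : ∀ x ∈ (K : Set W), ∀ y ∈ (K : Set W), s(x, y) ∈ p.edges → T.Adj x y :=
    fun x hx y hy hxy => spanningCoe_induce_toSubgraph_adj.mpr ⟨hx, hy, hxy⟩
  refine ⟨a, d, ?_⟩
  rcases adj_path_of_degrees hab hbc hbd hT ha hb hc hd with ⟨h1, h2, h3⟩ | ⟨h1, h2, h3⟩
  · obtain ⟨P, hP⟩ := exists_isPath_of_mem_edges p hab hac had hbc hbd hcd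
      (by rw [hKabcd]; push_cast; rfl) (hedge h1) (hedge h2) (hedge h3)
      fun x hx y hy hxy =>
        mk_eq_path_edge_of_adj hac hbd hT ha hb hc hd h1 h2 h3 (hinside x hx y hy hxy)
    exact ⟨P, had, exitsVia_subset hXa, exitsVia_subset hXd, hP⟩
  · obtain ⟨P, hP⟩ := exists_isPath_of_mem_edges p hac hab had hbc.symm hcd hbd
      (by rw [hKabcd]; push_cast; exact congrArg (insert a) (Set.insert_comm b c {d}))
      (hedge h1) (hedge h2) (hedge h3)
      fun x hx y hy hxy =>
        mk_eq_path_edge_of_adj hab hcd (by grind) ha hc hb hd h1 h2 h3 (hinside x hx y hy hxy)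
    exact ⟨P, had, exitsVia_subset hXa, exitsVia_subset hXd, hP⟩

end Walk

end SimpleGraph

theorem clique_hamiltonian_paths_general {V : Type*} [Fintype V] [DecidableEq V]
    (G : SimpleGraph V) [DecidableRel G.Adj]
    (hbireg : G.IsBiregular42)
    {a b : G.edgeSet}
    (p : (G.lineGraph).Walk a a) (q : (G.lineGraph).Walk b b)
    (hp : p.IsHamiltonianCycle) (hq : q.IsHamiltonianCycle)
    (hdisj : Disjoint {x | x ∈ p.edges} {x | x ∈ q.edges})
    (u : V) (hu : G.degree u = 4) :
    (∃ (x y : G.edgeSet) (P : (G.lineGraph).Walk x y), x ≠ y ∧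
      u ∈ (x : Sym2 V) ∧ u ∈ (y : Sym2 V) ∧ P.IsPath ∧
      {z | z ∈ P.support} = {e : G.edgeSet | u ∈ (e : Sym2 V)} ∧
      {z | z ∈ P.edges} = {z | z ∈ p.edges ∧ ∀ e ∈ z, u ∈ (e : Sym2 V)}) ∧
    (∃ (x y : G.edgeSet) (Q : (G.lineGraph).Walk x y), x ≠ y ∧
      u ∈ (x : Sym2 V) ∧ u ∈ (y : Sym2 V) ∧ Q.IsPath ∧
      {z | z ∈ Q.support} = {e : G.edgeSet | u ∈ (e : Sym2 V)} ∧
      {z | z ∈ Q.edges} = {z | z ∈ q.edges ∧ ∀ e ∈ z, u ∈ (e : Sym2 V)}) ∧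
    {z | z ∈ p.edges ∧ ∃ e f : G.edgeSet, z = s(e, f) ∧
      u ∈ (e : Sym2 V) ∧ u ∉ (f : Sym2 V)}.ncard = 2 ∧
    {z | z ∈ q.edges ∧ ∃ e f : G.edgeSet, z = s(e, f) ∧
      u ∈ (e : Sym2 V) ∧ u ∉ (f : Sym2 V)}.ncard = 2 := by
  set K : Finset G.edgeSet := {e | u ∈ (e : Sym2 V)}
  have hK : #K = 4 := (G.card_filter_mem_edgeSet_eq_degree u).trans hu
  have hexit : ∀ e ∈ K, ∃ f ∉ K, ∀ e' ∉ K, G.lineGraph.Adj e e' → e' = f := by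
    intro e he
    obtain ⟨w, hw⟩ := Sym2.mem_iff_exists.mp (mem_filter.mp he).2
    have huw : G.Adj u w := by rw [← mem_edgeSet, ← hw]; exact e.2
    have hdeg : G.degree w = 2 := by rcases hbireg.2 huw with h | h <;> omega
    obtain ⟨f, hfu, hf⟩ := G.exists_lineGraph_adj_eq_of_degree_eq_two hw hdeg
    exact ⟨f, by simpa [K] using hfu, fun e' he' => hf e' (by simpa [K] using he')⟩
  choose! f hf using hexit
  have hpX := hp.card_exitsVia_eq_two hq hdisj hf hK
  have hqX := hq.card_exitsVia_eq_two hp hdisj.symm hf hK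
  refine ⟨?_, ?_, ?_, ?_⟩
  · simpa [K] using hp.exists_isPath_of_card_exitsVia_eq_two hf hK hpX
  · simpa [K] using hq.exists_isPath_of_card_exitsVia_eq_two hf hK hqX
  · simpa [K, hpX] using Walk.ncard_crossing_eq_card_exitsVia (p := p) hf
  · simpa [K, hqX] using Walk.ncard_crossing_eq_card_exitsVia (p := q) hf

theorem clique_hamiltonian_paths {V : Type*} [Fintype V] [DecidableEq V]
    (G : SimpleGraph V) [DecidableRel G.Adj]
    (hbireg : G.IsBiregular42)
    {a b : G.edgeSet}
    (p : (G.lineGraph).Walk a a) (q : (G.lineGraph).Walk b b)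
    (hp : p.IsHamiltonianCycle) (hq : q.IsHamiltonianCycle)
    (hdisj : Disjoint {x | x ∈ p.edges} {x | x ∈ q.edges})
    (hunion : {x | x ∈ p.edges} ∪ {x | x ∈ q.edges} = (G.lineGraph).edgeSet)
    (u : V) (hu : G.degree u = 4) :
    (∃ (x y : G.edgeSet) (P : (G.lineGraph).Walk x y), x ≠ y ∧
      u ∈ (x : Sym2 V) ∧ u ∈ (y : Sym2 V) ∧ P.IsPath ∧
      {z | z ∈ P.support} = {e : G.edgeSet | u ∈ (e : Sym2 V)} ∧
      {z | z ∈ P.edges} = {z | z ∈ p.edges ∧ ∀ e ∈ z, u ∈ (e : Sym2 V)}) ∧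
    (∃ (x y : G.edgeSet) (Q : (G.lineGraph).Walk x y), x ≠ y ∧
      u ∈ (x : Sym2 V) ∧ u ∈ (y : Sym2 V) ∧ Q.IsPath ∧
      {z | z ∈ Q.support} = {e : G.edgeSet | u ∈ (e : Sym2 V)} ∧
      {z | z ∈ Q.edges} = {z | z ∈ q.edges ∧ ∀ e ∈ z, u ∈ (e : Sym2 V)}) ∧
    {z | z ∈ p.edges ∧ ∃ e f : G.edgeSet, z = s(e, f) ∧
      u ∈ (e : Sym2 V) ∧ u ∉ (f : Sym2 V)}.ncard = 2 ∧
    {z | z ∈ q.edges ∧ ∃ e f : G.edgeSet, z = s(e, f) ∧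
      u ∈ (e : Sym2 V) ∧ u ∉ (f : Sym2 V)}.ncard = 2 :=
  clique_hamiltonian_paths_general G hbireg p q hp hq hdisj u hu
end

section
/- Let G be a simple 3-regular graph on 2n vertices that has a Hamiltonian cycle. Then there are at least 2^n ordered pairs (E1, E2) of edge sets of Hamiltonian cycles of L(G) such that E1 and E2 are disjoint and E1 ∪ E2 = E(L(G)). -/
/-!
Label a Hamiltonian cycle of `G` as `v 0, …, v (m - 1)` along `ZMod m`; the remaining edges form a
perfect matching of chords. The edges of `L(G)` split into the triangles formed by the three edges
at each `v i`. Given an orientation of the matching, i.e. a choice of one endpoint of each chord,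
walk through the cycle edges of `G` in order and detour through the chord at `v i` exactly when
`v i` is the chosen endpoint. This visits every cycle edge once and every chord once, so it is a
Hamiltonian cycle of `L(G)`. At each `v i` it uses either the two triangle edges through the chord
or the third one, so the cycles of an orientation and of its reverse partition the edges of
`L(G)`. Distinct orientations give distinct cycles, and there are `2 ^ n` orientations.
-/

section Orientation

variable {β : Type*}

/-- For the chord involution of a labelled Hamiltonian cycle, `S` is an orientation of the
complementary perfect matching, recorded as the set of chosen chord endpoints. -/
def IsOrientation (σ : β → β) (S : Finset β) : Prop := ∀ i, i ∈ S ↔ σ i ∉ S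

variable {σ : β → β}

lemma IsOrientation.compl [Fintype β] [DecidableEq β] {S : Finset β}
    (hS : IsOrientation σ S) : IsOrientation σ Sᶜ := fun i => by
  simp only [Finset.mem_compl]
  exact not_congr (hS i)

lemma exists_isOrientation [Fintype β] (hσ : Function.Involutive σ) (hfix : ∀ i, σ i ≠ i) :
    ∃ R, IsOrientation σ R := by
  let e := Fintype.equivFin β
  refine ⟨({i | e i < e (σ i)} : Finset β), fun i => ?_⟩
  have : e (σ i) ≠ e i := e.injective.ne (hfix i)
  simp only [Finset.mem_filter, Finset.mem_univ, true_and, hσ i, not_lt]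
  omega

lemma IsOrientation.card_eq [Fintype β] [DecidableEq β] (hσ : Function.Involutive σ)
    {R : Finset β} (hR : IsOrientation σ R) {n : ℕ} (hcard : Fintype.card β = 2 * n) :
    R.card = n := by
  have hcompl : Rᶜ = R.map hσ.toPerm.toEmbedding := by
    ext i
    have := hR (σ i)
    rw [hσ i] at this
    simpa [hσ.eq_iff, eq_comm] using this.symm
  have := R.card_add_card_compl
  rw [hcompl, Finset.card_map] at this
  omega

/-- An orientation is determined by its intersection with a fixed orientation `R`, and every
subset of `R` arises. -/
lemma two_pow_le_ncard_isOrientation [Fintype β] [DecidableEq β] (hσ : Function.Involutive σ)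
    (hfix : ∀ i, σ i ≠ i) {n : ℕ} (hcard : Fintype.card β = 2 * n) :
    2 ^ n ≤ {S | IsOrientation σ S}.ncard := by
  obtain ⟨R, hR⟩ := exists_isOrientation hσ hfix
  let extend (T : Finset β) : Finset β := {i | if i ∈ R then i ∈ T else σ i ∉ T}
  calc 2 ^ n = (R.powerset : Set (Finset β)).ncard := by
        rw [Set.ncard_coe_finset, Finset.card_powerset, hR.card_eq hσ hcard]
    _ ≤ _ := by
      refine Set.ncard_le_ncard_of_injOn extend (fun T _ i => ?_) (fun T hT T' hT' h => ?_)
      · by_cases hi : i ∈ R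
        · simp [extend, hi, (hR i).1 hi, hσ i]
        · simp [extend, hi, (hR (σ i)).2 (by rwa [hσ i])]
      · simp only [Finset.coe_powerset, Set.mem_preimage, Set.mem_powerset_iff,
          Finset.coe_subset] at hT hT'
        ext i
        by_cases hi : i ∈ R
        · simpa [extend, hi] using congrArg (i ∈ ·) h
        · exact iff_of_false (fun h => hi (hT h)) (fun h => hi (hT' h))

end Orientation

namespace ZMod

variable {α : Type*} {m : ℕ}

lemma sub_one_ne_add_one_s12 (hm : 3 ≤ m) (i : ZMod m) : i - 1 ≠ i + 1 := fun h => by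
  have h2 : ((2 : ℕ) : ZMod m) = 0 := by push_cast; linear_combination -h
  have := Nat.le_of_dvd two_pos ((ZMod.natCast_eq_zero_iff _ _).1 h2)
  omega

lemma mem_flatMap_range_natCast [NeZero m] {f : ZMod m → List α} {a : α} :
    a ∈ (List.range m).flatMap (fun k : ℕ => f k) ↔ ∃ i, a ∈ f i := by
  simp only [List.mem_flatMap, List.mem_range]
  exact ⟨fun ⟨k, _, hk⟩ => ⟨k, hk⟩,
    fun ⟨i, hi⟩ => ⟨i.val, i.val_lt, by simpa using hi⟩⟩

lemma nodup_flatMap_range_natCast {f : ZMod m → List α} (hf : ∀ i, (f i).Nodup)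
    (hdisj : Pairwise fun i j => List.Disjoint (f i) (f j)) :
    ((List.range m).flatMap fun k : ℕ => f k).Nodup := by
  refine List.nodup_flatMap.2 ⟨fun k _ => hf k, (List.nodup_range).pairwise_of_forall_ne ?_⟩
  intro a ha b hb hab
  refine hdisj fun h => hab ?_
  rw [List.mem_range] at ha hb
  simpa [Nat.mod_eq_of_lt, ha, hb] using congrArg ZMod.val h

end ZMod

namespace SimpleGraph

variable {V : Type*} {G : SimpleGraph V}

namespace Walk

def concatRange {x : ℕ → V} (w : ∀ k, G.Walk (x k) (x (k + 1))) : ∀ k, G.Walk (x 0) (x k)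
  | 0 => nil
  | k + 1 => (concatRange w k).append (w k)

variable {x : ℕ → V} (w : ∀ k, G.Walk (x k) (x (k + 1)))

lemma support_tail_concatRange (k : ℕ) :
    (concatRange w k).support.tail = (List.range k).flatMap fun j => (w j).support.tail := by
  induction k with
  | zero => rfl
  | succ k ih => simp [concatRange, tail_support_append, ih, List.range_succ]

lemma edges_concatRange (k : ℕ) :
    (concatRange w k).edges = (List.range k).flatMap fun j => (w j).edges := by
  induction k with
  | zero => rfl
  | succ k ih => simp [concatRange, ih, List.range_succ]

lemma isHamiltonianCycle_of_nodup_support_tail [DecidableEq V] {u : V} {p : G.Walk u u}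
    (hlen : 3 ≤ p.length) (hnodup : p.support.tail.Nodup) (hmem : ∀ v, v ∈ p.support.tail) :
    p.IsHamiltonianCycle := by
  have hnil : ¬ p.Nil := by rw [← length_eq_zero_iff]; omega
  refine isHamiltonianCycle_iff_isCycle_and_support_count_tail_eq_one.2
    ⟨isCycle_iff_isPath_tail_and_le_length.2 ⟨?_, hlen⟩,
      fun v => List.count_eq_one_of_mem hnodup (hmem v)⟩
  rwa [isPath_def, support_tail_of_not_nil _ hnil]

lemma getVert_mod_length {u : V} (c : G.Walk u u) {k : ℕ} (hk : k ≤ c.length) :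
    c.getVert (k % c.length) = c.getVert k := by
  rcases hk.lt_or_eq with hk | rfl
  · rw [Nat.mod_eq_of_lt hk]
  · simp

lemma IsHamiltonianCycle.exists_equiv_zmod_s12 [Fintype V] [DecidableEq V] {u : V}
    {c : G.Walk u u} (hc : c.IsHamiltonianCycle) :
    ∃ v : ZMod (Fintype.card V) ≃ V, ∀ i, G.Adj (v i) (v (i + 1)) := by
  have : Nonempty V := ⟨u⟩
  set m := Fintype.card V
  have hlen : c.length = m := hc.length_eq
  have hm : 1 < m := by have := hc.isCycle.three_le_length; omega
  let f : ZMod m → V := fun i => c.getVert i.val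
  have hinj : f.Injective := fun i j hij =>
    ZMod.val_injective m <| hc.isCycle.getVert_injOn'
      (by simp only [Set.mem_ofPred_eq]; have := i.val_lt; omega)
      (by simp only [Set.mem_ofPred_eq]; have := j.val_lt; omega) hij
  refine ⟨.ofBijective f ((Fintype.bijective_iff_injective_and_card f).2 ⟨hinj, ZMod.card m⟩),
    fun i => ?_⟩
  have hsucc : (i + 1).val = (i.val + 1) % c.length := by
    rw [hlen, ZMod.val_add, ZMod.val_one'' hm.ne']
  simp only [Equiv.ofBijective_apply, f, hsucc,
    c.getVert_mod_length (by have := i.val_lt; omega : i.val + 1 ≤ c.length)]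
  exact c.adj_getVert_succ (by have := i.val_lt; omega)

end Walk

lemma eq_of_forall_mem_of_mem_edgeSet_lineGraph {x : Sym2 G.edgeSet}
    (hx : x ∈ G.lineGraph.edgeSet) {a b : V} (ha : ∀ e ∈ x, a ∈ (e : Sym2 V))
    (hb : ∀ e ∈ x, b ∈ (e : Sym2 V)) : a = b := by
  induction x using Sym2.ind with | _ e e' => ?_
  by_contra hab
  have he := (Sym2.mem_and_mem_iff hab).1
    ⟨ha e (Sym2.mem_mk_left _ _), hb e (Sym2.mem_mk_left _ _)⟩
  have he' := (Sym2.mem_and_mem_iff hab).1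
    ⟨ha e' (Sym2.mem_mk_right _ _), hb e' (Sym2.mem_mk_right _ _)⟩
  exact (lineGraph_adj_iff_exists.1 hx).1 (Subtype.ext (he.trans he'.symm))

/-- `G` is cubic with Hamiltonian cycle `vert 0, vert 1, …, vert (m - 1)`; the remaining edges
`s(vert i, vert (chord i))` form the complementary perfect matching. -/
structure CubicHamiltonianLabelling (G : SimpleGraph V) (m : ℕ) where
  vert : ZMod m ≃ V
  chord : ZMod m → ZMod m
  three_le : 3 ≤ m
  adj_iff (i j : ZMod m) : G.Adj (vert i) (vert j) ↔ j = i - 1 ∨ j = i + 1 ∨ j = chord i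
  chord_ne_pred (i : ZMod m) : chord i ≠ i - 1
  chord_ne_succ (i : ZMod m) : chord i ≠ i + 1

lemma Walk.IsHamiltonianCycle.exists_cubicHamiltonianLabelling [Fintype V] [DecidableEq V]
    [DecidableRel G.Adj] (hG : G.IsRegularOfDegree 3) {u : V} {c : G.Walk u u}
    (hc : c.IsHamiltonianCycle) : Nonempty (G.CubicHamiltonianLabelling (Fintype.card V)) := by
  obtain ⟨v, hv⟩ : ∃ v : ZMod (Fintype.card V) ≃ V, ∀ i, G.Adj (v i) (v (i + 1)) :=
    hc.exists_equiv_zmod_s12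
  have h3 : 3 ≤ Fintype.card V := hG u ▸ (G.degree_lt_card_verts u).le
  have hthird (i) : ∃ w, G.neighborFinset (v i) = {v (i - 1), v (i + 1), w} ∧
      w ≠ v (i - 1) ∧ w ≠ v (i + 1) := by
    have hsub : {v (i - 1), v (i + 1)} ⊆ G.neighborFinset (v i) := by
      simpa [Finset.insert_subset_iff, hv i, G.adj_comm] using hv (i - 1)
    have hpair : ({v (i - 1), v (i + 1)} : Finset V).card = 2 :=
      Finset.card_pair (v.injective.ne (ZMod.sub_one_ne_add_one_s12 h3 i))
    obtain ⟨w, hw⟩ := Finset.card_eq_one.1 (by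
      rw [Finset.card_sdiff_of_subset hsub, hpair, card_neighborFinset_eq_degree, hG (v i)] :
      (G.neighborFinset (v i) \ {v (i - 1), v (i + 1)}).card = 1)
    have hwmem : w ∈ G.neighborFinset (v i) \ {v (i - 1), v (i + 1)} :=
      hw ▸ Finset.mem_singleton_self w
    refine ⟨w, ?_, by simpa [not_or] using (Finset.mem_sdiff.1 hwmem).2⟩
    rw [← Finset.union_sdiff_of_subset hsub, hw]
    simp [Finset.insert_union]
  choose w hw hw_pred hw_succ using hthird
  refine ⟨⟨v, fun i => v.symm (w i), h3, fun i j => ?_, fun i h => ?_, fun i h => ?_⟩⟩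
  · rw [← mem_neighborFinset, hw]
    simp [v.eq_symm_apply]
  · exact hw_pred i (by simp [← h])
  · exact hw_succ i (by simp [← h])

namespace CubicHamiltonianLabelling

variable {m : ℕ} (L : G.CubicHamiltonianLabelling m)

lemma adj_succ (i : ZMod m) : G.Adj (L.vert i) (L.vert (i + 1)) := by simp [L.adj_iff]

lemma adj_chord (i : ZMod m) : G.Adj (L.vert i) (L.vert (L.chord i)) := by simp [L.adj_iff]

lemma chord_ne_self (i : ZMod m) : L.chord i ≠ i := fun h =>
  G.loopless.irrefl _ (h ▸ L.adj_chord i)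

lemma chord_chord (i : ZMod m) : L.chord (L.chord i) = i := by
  rcases (L.adj_iff _ _).1 (L.adj_chord i).symm with h | h | h
  · exact absurd (by linear_combination -h) (L.chord_ne_succ i)
  · exact absurd (by linear_combination -h) (L.chord_ne_pred i)
  · exact h.symm

def cycleEdge (i : ZMod m) : G.edgeSet := ⟨s(L.vert i, L.vert (i + 1)), L.adj_succ i⟩

def chordEdge (i : ZMod m) : G.edgeSet := ⟨s(L.vert i, L.vert (L.chord i)), L.adj_chord i⟩

lemma vert_mem_cycleEdge (i : ZMod m) : L.vert i ∈ (L.cycleEdge i : Sym2 V) :=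
  Sym2.mem_mk_left _ _

lemma vert_mem_cycleEdge_pred (i : ZMod m) : L.vert i ∈ (L.cycleEdge (i - 1) : Sym2 V) := by
  simp [cycleEdge]

lemma vert_mem_chordEdge (i : ZMod m) : L.vert i ∈ (L.chordEdge i : Sym2 V) :=
  Sym2.mem_mk_left _ _

lemma cycleEdge_injective : Function.Injective L.cycleEdge := by
  intro i j h
  rcases Sym2.eq_iff.1 (congrArg Subtype.val h) with ⟨h1, -⟩ | ⟨h1, h2⟩
  · exact L.vert.injective h1
  · exact absurd (by linear_combination L.vert.injective h1 - L.vert.injective h2)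
      (ZMod.sub_one_ne_add_one_s12 L.three_le j)

lemma chordEdge_ne_cycleEdge (i j : ZMod m) : L.chordEdge i ≠ L.cycleEdge j := by
  intro h
  rcases Sym2.eq_iff.1 (congrArg Subtype.val h) with ⟨h1, h2⟩ | ⟨h1, h2⟩
  · exact L.chord_ne_succ i (by rw [L.vert.injective h2, L.vert.injective h1])
  · exact L.chord_ne_pred i (by linear_combination L.vert.injective h2 - L.vert.injective h1)

lemma chordEdge_chord (i : ZMod m) : L.chordEdge (L.chord i) = L.chordEdge i :=
  Subtype.ext <| by simp [chordEdge, L.chord_chord, Sym2.eq_swap]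

lemma eq_or_eq_chord_of_chordEdge_eq {i j : ZMod m} (h : L.chordEdge i = L.chordEdge j) :
    j = i ∨ j = L.chord i := by
  rcases Sym2.eq_iff.1 (congrArg Subtype.val h) with ⟨h1, -⟩ | ⟨-, h2⟩
  · exact .inl (L.vert.injective h1).symm
  · exact .inr (L.vert.injective h2).symm

lemma eq_of_vert_mem {i : ZMod m} {e : G.edgeSet} (he : L.vert i ∈ (e : Sym2 V)) :
    e = L.cycleEdge (i - 1) ∨ e = L.cycleEdge i ∨ e = L.chordEdge i := by
  obtain ⟨e, he'⟩ := e
  induction e using Sym2.ind with | _ x y => ?_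
  wlog hx : x = L.vert i generalizing x y
  · have hy : y = L.vert i := by simp_all [Sym2.mem_iff, eq_comm]
    simpa only [Sym2.eq_swap] using
      this y x (by rwa [Sym2.eq_swap]) (by simpa [or_comm] using he) hy
  obtain ⟨j, rfl⟩ := L.vert.surjective y
  subst hx
  rcases (L.adj_iff i j).1 he' with rfl | rfl | rfl
  · exact .inl (Subtype.ext <| by simp [cycleEdge, Sym2.eq_swap])
  · exact .inr (.inl rfl)
  · exact .inr (.inr rfl)

lemma exists_eq_cycleEdge_or_chordEdge (e : G.edgeSet) :
    (∃ i, e = L.cycleEdge i) ∨ ∃ i, e = L.chordEdge i := by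
  obtain ⟨i, hi⟩ := L.vert.surjective (e : Sym2 V).out.1
  rcases L.eq_of_vert_mem (hi ▸ Sym2.out_fst_mem _) with h | h | h
  exacts [.inl ⟨_, h⟩, .inl ⟨_, h⟩, .inr ⟨_, h⟩]

lemma adj_cycleEdge_pred_chordEdge (i : ZMod m) :
    G.lineGraph.Adj (L.cycleEdge (i - 1)) (L.chordEdge i) :=
  lineGraph_adj_iff_exists.2 ⟨(L.chordEdge_ne_cycleEdge i _).symm, _,
    L.vert_mem_cycleEdge_pred i, L.vert_mem_chordEdge i⟩

lemma adj_chordEdge_cycleEdge (i : ZMod m) : G.lineGraph.Adj (L.chordEdge i) (L.cycleEdge i) :=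
  lineGraph_adj_iff_exists.2 ⟨L.chordEdge_ne_cycleEdge i i, _,
    L.vert_mem_chordEdge i, L.vert_mem_cycleEdge i⟩

lemma adj_cycleEdge_pred_cycleEdge (i : ZMod m) :
    G.lineGraph.Adj (L.cycleEdge (i - 1)) (L.cycleEdge i) :=
  lineGraph_adj_iff_exists.2 ⟨fun h => ZMod.sub_one_ne_add_one_s12 L.three_le i (by
    linear_combination 2 * L.cycleEdge_injective h), _,
    L.vert_mem_cycleEdge_pred i, L.vert_mem_cycleEdge i⟩

variable (S : Finset (ZMod m))

/-- The part of the cycle of `L(G)` through the triangle at `vert i`. -/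
def cornerWalk (i : ZMod m) : G.lineGraph.Walk (L.cycleEdge (i - 1)) (L.cycleEdge i) :=
  if i ∈ S then
    .cons (L.adj_cycleEdge_pred_chordEdge i) (.cons (L.adj_chordEdge_cycleEdge i) .nil)
  else .cons (L.adj_cycleEdge_pred_cycleEdge i) .nil

lemma support_tail_cornerWalk (i : ZMod m) : (L.cornerWalk S i).support.tail =
    if i ∈ S then [L.chordEdge i, L.cycleEdge i] else [L.cycleEdge i] := by
  unfold cornerWalk; split_ifs <;> rfl

lemma edges_cornerWalk (i : ZMod m) : (L.cornerWalk S i).edges =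
    if i ∈ S then [s(L.cycleEdge (i - 1), L.chordEdge i), s(L.chordEdge i, L.cycleEdge i)]
    else [s(L.cycleEdge (i - 1), L.cycleEdge i)] := by
  unfold cornerWalk; split_ifs <;> rfl

def lineCycle : G.lineGraph.Walk (L.cycleEdge (-1)) (L.cycleEdge (-1)) :=
  (Walk.concatRange (x := fun k : ℕ => L.cycleEdge (k - 1))
    (fun k => (L.cornerWalk S k).copy rfl (congrArg L.cycleEdge (by push_cast; ring))) m).copy
    (by simp) (by simp)

lemma support_tail_lineCycle : (L.lineCycle S).support.tail =
    (List.range m).flatMap fun k : ℕ => (L.cornerWalk S k).support.tail := by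
  simp [lineCycle, Walk.support_tail_concatRange]

lemma edges_lineCycle : (L.lineCycle S).edges =
    (List.range m).flatMap fun k : ℕ => (L.cornerWalk S k).edges := by
  simp [lineCycle, Walk.edges_concatRange]

lemma le_length_lineCycle : m ≤ (L.lineCycle S).length := by
  have hlen (i : ZMod m) : 1 ≤ (L.cornerWalk S i).length := by
    unfold cornerWalk; split_ifs <;> simp
  have h := List.length_le_sum_of_one_le
    ((List.range m).map fun k : ℕ => (L.cornerWalk S k).support.tail.length)
    (by simpa using fun k (_ : k < m) => hlen k)
  rwa [← List.length_flatMap, ← support_tail_lineCycle, List.length_tail, Walk.length_support,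
    Nat.add_sub_cancel, List.length_map, List.length_range] at h

lemma eq_of_chordEdge_eq_of_isOrientation {S : Finset (ZMod m)} (hS : IsOrientation L.chord S)
    {i j : ZMod m} (hi : i ∈ S) (hj : j ∈ S) (h : L.chordEdge i = L.chordEdge j) : i = j := by
  rcases L.eq_or_eq_chord_of_chordEdge_eq h with rfl | rfl
  · rfl
  · exact absurd hj ((hS i).1 hi)

lemma vert_mem_of_mem_edges_cornerWalk {i : ZMod m} {x : Sym2 G.edgeSet}
    (hx : x ∈ (L.cornerWalk S i).edges) {e : G.edgeSet} (he : e ∈ x) :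
    L.vert i ∈ (e : Sym2 V) := by
  rw [edges_cornerWalk] at hx
  split_ifs at hx <;> simp only [List.mem_cons, List.not_mem_nil, or_false] at hx <;>
    rcases hx with rfl | rfl <;> rcases Sym2.mem_iff.1 he with rfl | rfl <;>
    simp [vert_mem_cycleEdge, vert_mem_cycleEdge_pred, vert_mem_chordEdge]

lemma eq_of_mem_edges_cornerWalk {S T : Finset (ZMod m)} {i j : ZMod m} {x : Sym2 G.edgeSet}
    (hi : x ∈ (L.cornerWalk S i).edges) (hj : x ∈ (L.cornerWalk T j).edges) : i = j :=
  L.vert.injective <| eq_of_forall_mem_of_mem_edgeSet_lineGraph (Walk.edges_subset_edgeSet _ hi)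
    (fun _ => L.vert_mem_of_mem_edges_cornerWalk S hi)
    (fun _ => L.vert_mem_of_mem_edges_cornerWalk T hj)

lemma chordEdge_mem_iff_of_mem_edges_cornerWalk {i : ZMod m} {x : Sym2 G.edgeSet}
    (hx : x ∈ (L.cornerWalk S i).edges) : L.chordEdge i ∈ x ↔ i ∈ S := by
  rw [edges_cornerWalk] at hx
  split_ifs at hx with hi <;> simp only [List.mem_cons, List.not_mem_nil, or_false] at hx
  · rcases hx with rfl | rfl <;> simp [hi]
  · subst hx
    simp [hi, L.chordEdge_ne_cycleEdge]

lemma nodup_support_tail_lineCycle (hS : IsOrientation L.chord S) :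
    (L.lineCycle S).support.tail.Nodup := by
  rw [support_tail_lineCycle]
  refine ZMod.nodup_flatMap_range_natCast (f := fun i => (L.cornerWalk S i).support.tail)
    (fun i => ?_) (fun i j hij => ?_)
  · rw [support_tail_cornerWalk]; split_ifs <;> simp [L.chordEdge_ne_cycleEdge]
  · have := L.eq_of_chordEdge_eq_of_isOrientation hS (i := i) (j := j)
    simp only [support_tail_cornerWalk]
    split_ifs <;> simp_all [L.chordEdge_ne_cycleEdge, L.cycleEdge_injective.ne hij, Ne.symm]

variable [NeZero m]

lemma mem_support_tail_lineCycle {e : G.edgeSet} :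
    e ∈ (L.lineCycle S).support.tail ↔ ∃ i, e ∈ (L.cornerWalk S i).support.tail := by
  rw [support_tail_lineCycle]
  exact ZMod.mem_flatMap_range_natCast (f := fun i => (L.cornerWalk S i).support.tail)

lemma mem_edges_lineCycle {x : Sym2 G.edgeSet} :
    x ∈ (L.lineCycle S).edges ↔ ∃ i, x ∈ (L.cornerWalk S i).edges := by
  rw [edges_lineCycle]
  exact ZMod.mem_flatMap_range_natCast (f := fun i => (L.cornerWalk S i).edges)

lemma mem_support_tail_lineCycle_of_isOrientation (hS : IsOrientation L.chord S)
    (e : G.edgeSet) : e ∈ (L.lineCycle S).support.tail := by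
  rw [mem_support_tail_lineCycle]
  rcases L.exists_eq_cycleEdge_or_chordEdge e with ⟨i, rfl⟩ | ⟨i, rfl⟩
  · refine ⟨i, ?_⟩
    rw [support_tail_cornerWalk]; split_ifs <;> simp
  · by_cases hi : i ∈ S
    · exact ⟨i, by simp [support_tail_cornerWalk, hi]⟩
    · exact ⟨L.chord i, by simp [support_tail_cornerWalk, (hS _).2 (by rwa [L.chord_chord]),
        L.chordEdge_chord]⟩

lemma isHamiltonianCycle_lineCycle [DecidableEq V] (hS : IsOrientation L.chord S) :
    (L.lineCycle S).IsHamiltonianCycle :=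
  Walk.isHamiltonianCycle_of_nodup_support_tail (L.three_le.trans (L.le_length_lineCycle S))
    (L.nodup_support_tail_lineCycle S hS) (L.mem_support_tail_lineCycle_of_isOrientation S hS)

lemma exists_mem_edges_cornerWalk {x : Sym2 G.edgeSet} (hx : x ∈ G.lineGraph.edgeSet) :
    ∃ i, x ∈ (L.cornerWalk S i).edges ∨ x ∈ (L.cornerWalk Sᶜ i).edges := by
  induction x using Sym2.ind with | _ e e' => ?_
  obtain ⟨hne, a, ha, ha'⟩ := lineGraph_adj_iff_exists.1 hx
  obtain ⟨i, rfl⟩ := L.vert.surjective a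
  have htriangle : ∀ y ∈ [s(L.cycleEdge (i - 1), L.chordEdge i),
      s(L.chordEdge i, L.cycleEdge i), s(L.cycleEdge (i - 1), L.cycleEdge i)],
      y ∈ (L.cornerWalk S i).edges ∨ y ∈ (L.cornerWalk Sᶜ i).edges := by
    by_cases hi : i ∈ S <;> simp [edges_cornerWalk, hi]
  refine ⟨i, htriangle _ ?_⟩
  rcases L.eq_of_vert_mem ha with rfl | rfl | rfl <;>
    rcases L.eq_of_vert_mem ha' with rfl | rfl | rfl <;>
    first
    | exact absurd rfl hne
    | simp [Sym2.eq_swap]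

lemma disjoint_edges_lineCycle_compl :
    Disjoint {x | x ∈ (L.lineCycle S).edges} {x | x ∈ (L.lineCycle Sᶜ).edges} := by
  refine Set.disjoint_left.2 fun x hx hx' => ?_
  obtain ⟨i, hi⟩ := (L.mem_edges_lineCycle S).1 hx
  obtain ⟨j, hj⟩ := (L.mem_edges_lineCycle Sᶜ).1 hx'
  obtain rfl := L.eq_of_mem_edges_cornerWalk hi hj
  have := (L.chordEdge_mem_iff_of_mem_edges_cornerWalk S hi).symm.trans
    (L.chordEdge_mem_iff_of_mem_edges_cornerWalk Sᶜ hj)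
  simp at this

lemma edges_lineCycle_union_compl :
    {x | x ∈ (L.lineCycle S).edges} ∪ {x | x ∈ (L.lineCycle Sᶜ).edges} =
      G.lineGraph.edgeSet := by
  ext x
  refine ⟨?_, fun hx => ?_⟩
  · rintro (hx | hx) <;> exact Walk.edges_subset_edgeSet _ hx
  · obtain ⟨i, hi | hi⟩ := L.exists_mem_edges_cornerWalk S hx
    exacts [.inl ((L.mem_edges_lineCycle S).2 ⟨i, hi⟩),
      .inr ((L.mem_edges_lineCycle Sᶜ).2 ⟨i, hi⟩)]

lemma mem_iff_mem_edges_lineCycle (i : ZMod m) :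
    i ∈ S ↔ s(L.chordEdge i, L.cycleEdge i) ∈ (L.lineCycle S).edges := by
  rw [mem_edges_lineCycle]
  refine ⟨fun hi => ⟨i, by simp [edges_cornerWalk, hi]⟩, fun ⟨j, hj⟩ => ?_⟩
  have hi : s(L.chordEdge i, L.cycleEdge i) ∈ (L.cornerWalk {i} i).edges := by
    simp [edges_cornerWalk]
  obtain rfl := L.eq_of_mem_edges_cornerWalk hj hi
  exact (L.chordEdge_mem_iff_of_mem_edges_cornerWalk S hj).1 (Sym2.mem_mk_left _ _)

lemma injective_edges_lineCycle :
    Function.Injective fun S => {x | x ∈ (L.lineCycle S).edges} := by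
  intro S T h
  ext i
  rw [L.mem_iff_mem_edges_lineCycle S, L.mem_iff_mem_edges_lineCycle T]
  exact Set.ext_iff.1 h _

end CubicHamiltonianLabelling

end SimpleGraph

theorem cubic_many_decompositions {V : Type*} [Fintype V] [DecidableEq V]
    (G : SimpleGraph V) [DecidableRel G.Adj] (n : ℕ)
    (hcard : Fintype.card V = 2 * n)
    (hreg : G.IsRegularOfDegree 3)
    (hham : ∃ (a : V) (c : G.Walk a a), c.IsHamiltonianCycle) :
    2 ^ n ≤ {EE : Set (Sym2 G.edgeSet) × Set (Sym2 G.edgeSet) |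
      (∃ (a : G.edgeSet) (p : (G.lineGraph).Walk a a),
        p.IsHamiltonianCycle ∧ {x | x ∈ p.edges} = EE.1) ∧
      (∃ (b : G.edgeSet) (q : (G.lineGraph).Walk b b),
        q.IsHamiltonianCycle ∧ {x | x ∈ q.edges} = EE.2) ∧
      Disjoint EE.1 EE.2 ∧ EE.1 ∪ EE.2 = (G.lineGraph).edgeSet}.ncard := by
  obtain ⟨a, c, hc⟩ := hham
  obtain ⟨L⟩ := hc.exists_cubicHamiltonianLabelling hreg
  have : Nonempty V := ⟨a⟩
  let edgesOf (S : Finset (ZMod (Fintype.card V))) := {x | x ∈ (L.lineCycle S).edges}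
  calc 2 ^ n ≤ {S | IsOrientation L.chord S}.ncard :=
        two_pow_le_ncard_isOrientation L.chord_chord L.chord_ne_self (by rw [ZMod.card, hcard])
    _ ≤ _ := Set.ncard_le_ncard_of_injOn (fun S => (edgesOf S, edgesOf Sᶜ))
        (fun S hS => by
          exact ⟨⟨_, _, L.isHamiltonianCycle_lineCycle S hS, rfl⟩,
            ⟨_, _, L.isHamiltonianCycle_lineCycle Sᶜ hS.compl, rfl⟩,
            L.disjoint_edges_lineCycle_compl S, L.edges_lineCycle_union_compl S⟩)
        (fun _ _ _ _ h => L.injective_edges_lineCycle (congrArg Prod.fst h))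
end
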